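/- arXiv:1101.5743 — 8 statements merged into one kernel-verified Lean document; each statement's English description precedes it below -/
import Mathlib

section
/- Let X_1,...,X_n be i.i.d. symmetric random variables with mean zero that have a density (equivalently, whose law is atomless). Then P(max_{1≤k≤n} S_k < 0) = (2n-1)!!/(2n)!!, where S_k = X_1 + ... + X_k. -/
/-!
Let `S_0 = 0, S_1, …, S_n` be the walk. The event that `S_0, …, S_n` attain a strict minimum at
time `k` is the intersection of an event depending on the first `k` steps (`S_k < S_j` for
`j < k`, which by time reversal is as likely as `S_1, …, S_k < 0`) and an independent event
depending on the last `n - k` steps (`S_j > S_k` for `j > k`, which by symmetry is as likely as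
staying negative for `n - k` steps). Ties have probability zero, so `q_n = P(S_1, …, S_n < 0)`
satisfies `∑_{i + j = n} q_i q_j = 1` and `q_0 = 1`, i.e. `(∑ q_n x^n)² = 1 / (1 - x)`.
By Chu–Vandermonde, the coefficients `(-1)^k (-1/2 choose k) = (2k-1)‼ / (2k)‼` of
`(1 - x)^(-1/2)` satisfy the same identity, which determines the sequence.
-/

open MeasureTheory ProbabilityTheory Finset

open scoped Nat

theorem PowerSeries.eq_of_sq_eq_sq {R : Type*} [CommRing R] [IsDomain R] [NeZero (2 : R)]
    {A B : PowerSeries R} (h : A ^ 2 = B ^ 2)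
    (h0 : constantCoeff A = constantCoeff B) (hB : constantCoeff B ≠ 0) : A = B := by
  refine (sq_eq_sq_iff_eq_or_eq_neg.1 h).resolve_right fun hAB => hB ?_
  rw [hAB, map_neg, neg_eq_iff_add_eq_zero, ← two_mul] at h0
  exact (mul_eq_zero.1 h0).resolve_left two_ne_zero

theorem eq_of_sum_antidiagonal_mul_self_eq {R : Type*} [CommRing R] [IsDomain R]
    [NeZero (2 : R)] {a b : ℕ → R}
    (h : ∀ n, ∑ ij ∈ antidiagonal n, a ij.1 * a ij.2 = ∑ ij ∈ antidiagonal n, b ij.1 * b ij.2)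
    (h0 : a 0 = b 0) (hb0 : b 0 ≠ 0) : a = b := by
  have hsq : PowerSeries.mk a ^ 2 = PowerSeries.mk b ^ 2 := by
    ext n
    simpa only [sq, PowerSeries.coeff_mul, PowerSeries.coeff_mk] using h n
  funext n
  simpa using congrArg (PowerSeries.coeff n)
    (PowerSeries.eq_of_sq_eq_sq hsq (by simpa using h0) (by simpa using hb0))

theorem Ring.choose_neg_one {R : Type*} [CommRing R] [BinomialRing R] (n : ℕ) :
    Ring.choose (-1 : R) n = (-1) ^ n := by
  rw [Ring.choose_neg, add_sub_cancel_left, Ring.choose_natCast, Nat.choose_self]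
  simp [Units.smul_def]

theorem Ring.choose_neg_half {K : Type*} [Field K] [CharZero K] (k : ℕ) :
    Ring.choose (-2⁻¹ : K) k = (-1) ^ k * ((2 * k - 1)‼ / (2 * k)‼ : K) := by
  induction k with
  | zero => simp
  | succ k ih =>
    have hrec := Ring.choose_smul_choose (-2⁻¹ : K) (Nat.le_add_right k 1)
    rw [Nat.choose_succ_self_right, Nat.add_sub_cancel_left, Ring.choose_one_right, ih,
      nsmul_eq_mul] at hrec
    have hodd : (2 * (k + 1) - 1)‼ = (2 * k + 1) * (2 * k - 1)‼ := by
      rw [show 2 * (k + 1) - 1 = 2 * k + 1 by omega, Nat.doubleFactorial_add_one]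
    have heven : (2 * (k + 1))‼ = (2 * k + 2) * (2 * k)‼ := Nat.doubleFactorial_add_two _
    have hne : ((2 * k)‼ : K) ≠ 0 := Nat.cast_ne_zero.2 (Nat.doubleFactorial_pos _).ne'
    rw [hodd, heven]
    push_cast at hrec ⊢
    field_simp at hrec ⊢
    linear_combination hrec

theorem sum_antidiagonal_doubleFactorial_ratio {K : Type*} [Field K] [CharZero K] (n : ℕ) :
    ∑ ij ∈ antidiagonal n,
      ((2 * ij.1 - 1)‼ / (2 * ij.1)‼ : K) * ((2 * ij.2 - 1)‼ / (2 * ij.2)‼ : K) = 1 := by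
  have h := Ring.add_choose_eq (r := (-2⁻¹ : K)) (s := -2⁻¹) n (Commute.refl _)
  rw [← neg_add, ← two_mul, mul_inv_cancel₀ two_ne_zero, Ring.choose_neg_one] at h
  have hsign : ∀ ij ∈ antidiagonal n, Ring.choose (-2⁻¹ : K) ij.1 * Ring.choose (-2⁻¹) ij.2 =
      (-1) ^ n * (((2 * ij.1 - 1)‼ / (2 * ij.1)‼ : K) * ((2 * ij.2 - 1)‼ / (2 * ij.2)‼ : K)) := by
    intro ij hij
    rw [← mem_antidiagonal.1 hij, pow_add, Ring.choose_neg_half, Ring.choose_neg_half]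
    ring
  rw [sum_congr rfl hsign, ← mul_sum] at h
  exact mul_left_cancel₀ (pow_ne_zero n (neg_ne_zero.2 one_ne_zero)) (h.symm.trans (mul_one _).symm)

namespace RandomWalk

def partialSum {m : ℕ} (x : Fin m → ℝ) (k : ℕ) : ℝ := ∑ i : Fin m with i.val < k, x i

def negativeWalks (m : ℕ) : Set (Fin m → ℝ) := {x | ∀ k ∈ Icc 1 m, partialSum x k < 0}

def strictMinAt (m k : ℕ) : Set (Fin m → ℝ) :=
  {x | ∀ j ≤ m, j ≠ k → partialSum x k < partialSum x j}

variable {k m : ℕ}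

@[fun_prop]
theorem measurable_partialSum (k : ℕ) : Measurable fun x : Fin m → ℝ => partialSum x k := by
  unfold partialSum
  fun_prop

theorem measurableSet_negativeWalks (m : ℕ) : MeasurableSet (negativeWalks m) := by
  simp only [negativeWalks, Set.ofPred_forall]
  exact .iInter fun k => .iInter fun _ => measurableSet_lt (by fun_prop) measurable_const

theorem measurableSet_strictMinAt (m k : ℕ) : MeasurableSet (strictMinAt m k) := by
  simp only [strictMinAt, Set.ofPred_forall]
  exact .iInter fun j => .iInter fun _ => .iInter fun _ =>
    measurableSet_lt (by fun_prop) (by fun_prop)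

theorem partialSum_zero (x : Fin m → ℝ) : partialSum x 0 = 0 := by
  simp [partialSum]

theorem partialSum_one (x : Fin (m + 1) → ℝ) : partialSum x 1 = x 0 := by
  simp [partialSum, sum_filter]

theorem partialSum_neg (x : Fin m → ℝ) (k : ℕ) : partialSum (-x) k = -partialSum x k := by
  simp [partialSum]

theorem partialSum_castAdd (x : Fin (k + m) → ℝ) {r : ℕ} (hr : r ≤ k) :
    partialSum (fun i => x (Fin.castAdd m i)) r = partialSum x r := by
  have hback : ∀ i : Fin m, ¬ k + (i : ℕ) < r := fun i => by omega
  simp [partialSum, sum_filter, Fin.sum_univ_add, hback]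

theorem partialSum_natAdd (x : Fin (k + m) → ℝ) (r : ℕ) :
    partialSum (fun i => x (Fin.natAdd k i)) r = partialSum x (k + r) - partialSum x k := by
  have hfront : ∀ i : Fin k, (i : ℕ) < k + r := fun i => by omega
  have hback : ∀ i : Fin m, ¬ k + (i : ℕ) < k := fun i => by omega
  simp [partialSum, sum_filter, Fin.sum_univ_add, hfront, hback]

theorem partialSum_rev (x : Fin m → ℝ) (t : ℕ) :
    partialSum (fun i => x (Fin.rev i)) t = partialSum x m - partialSum x (m - t) := by
  have htotal : partialSum x m = ∑ i, x i := by simp [partialSum]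
  rw [htotal, ← sum_filter_add_sum_filter_not univ (fun i : Fin m => (i : ℕ) < m - t)]
  simp only [partialSum, add_sub_cancel_left]
  exact sum_nbij' Fin.rev Fin.rev (by simp; omega) (by simp; omega) (by simp) (by simp) (by simp)

theorem partialSum_succ_eq_sum_Icc (f : ℕ → ℝ) {n k : ℕ} (hk : k ≤ n) :
    partialSum (fun i : Fin n => f (i + 1)) k = ∑ i ∈ Icc 1 k, f i := by
  have hrange : (range n).filter (· < k) = range k := by ext; simp; omega
  rw [partialSum, sum_filter, Fin.sum_univ_eq_sum_range (fun i => if i < k then f (i + 1) else 0),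
    ← sum_filter, hrange, range_eq_Ico, sum_Ico_add', zero_add, Ico_add_one_right_eq_Icc]

theorem strictMinAt_add (k m : ℕ) :
    strictMinAt (k + m) k =
      {x | (Fin.appendEquiv k m).symm x ∈ strictMinAt k k ×ˢ strictMinAt m 0} := by
  ext x
  simp only [strictMinAt, Set.mem_ofPred_eq, Set.mem_prod, Fin.appendEquiv_symm_apply,
    partialSum_castAdd x le_rfl, partialSum_natAdd, partialSum_zero, sub_pos]
  refine ⟨fun h => ⟨fun j hj hjk => ?_, fun j hj hj0 => h _ (by omega) (by omega)⟩,
    fun ⟨hfront, hback⟩ j hj hjk => ?_⟩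
  · rw [partialSum_castAdd x hj]
    exact h j (by omega) hjk
  · rcases lt_or_gt_of_ne hjk with hjk | hjk
    · simpa [partialSum_castAdd x hjk.le] using hfront j hjk.le hjk.ne
    · simpa [show k + (j - k) = j by omega] using hback (j - k) (by omega) (by omega)

theorem exists_mem_strictMinAt {n : ℕ} {x : Fin n → ℝ}
    (hx : Set.InjOn (partialSum x) (Set.Iic n)) : ∃ k ≤ n, x ∈ strictMinAt n k := by
  obtain ⟨k, hk, hmin⟩ := (range (n + 1)).exists_min_image (partialSum x) nonempty_range_add_one
  refine ⟨k, by simpa [Nat.lt_succ_iff] using hk, fun j hj hjk => ?_⟩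
  refine (hmin j (by simpa [Nat.lt_succ_iff] using hj)).lt_of_ne fun h => hjk (hx ?_ ?_ h.symm)
  · simpa using hj
  · simpa [Nat.lt_succ_iff] using hk

theorem pairwiseDisjoint_strictMinAt (n : ℕ) :
    (range (n + 1) : Set ℕ).PairwiseDisjoint (strictMinAt n) := by
  intro a ha b hb hab
  simp only [coe_range, Set.mem_Iio] at ha hb
  exact Set.disjoint_left.2 fun x hxa hxb =>
    (hxa b (by omega) hab.symm).not_gt (hxb a (by omega) hab)

section SigmaFinite

variable (μ : Measure ℝ) [SigmaFinite μ]

theorem measurePreserving_appendEquiv_symm (k m : ℕ) :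
    MeasurePreserving (Fin.appendEquiv k m).symm (Measure.pi fun _ => μ)
      ((Measure.pi fun _ => μ).prod (Measure.pi fun _ => μ)) := by
  convert (measurePreserving_sumPiEquivProdPi fun _ : Fin k ⊕ Fin m => μ).comp
    ((measurePreserving_piCongrLeft (fun _ : Fin (k + m) => μ) finSumFinEquiv).symm
      (MeasurableEquiv.piCongrLeft (fun _ => ℝ) finSumFinEquiv)) using 1
  funext x
  rfl

theorem measure_preimage_appendEquiv_symm {A : Set (Fin k → ℝ)} {B : Set (Fin m → ℝ)}
    (hA : MeasurableSet A) (hB : MeasurableSet B) :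
    Measure.pi (fun _ => μ) {x | (Fin.appendEquiv k m).symm x ∈ A ×ˢ B} =
      Measure.pi (fun _ => μ) A * Measure.pi (fun _ => μ) B := by
  rw [← Measure.prod_prod]
  exact (measurePreserving_appendEquiv_symm μ k m).measure_preimage (hA.prod hB).nullMeasurableSet

theorem measure_strictMinAt_zero [μ.IsNegInvariant] (m : ℕ) :
    Measure.pi (fun _ => μ) (strictMinAt m 0) = Measure.pi (fun _ => μ) (negativeWalks m) := by
  have hneg : (fun x : Fin m → ℝ => -x) ⁻¹' negativeWalks m = strictMinAt m 0 := by
    ext x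
    simp only [Set.mem_preimage, negativeWalks, strictMinAt, Set.mem_ofPred_eq, mem_Icc,
      partialSum_neg, partialSum_zero, neg_lt_zero]
    exact ⟨fun h j hj hj0 => h j ⟨by omega, hj⟩, fun h j hj => h j hj.2 (by omega)⟩
  rw [← hneg]
  exact (measurePreserving_pi _ _ fun _ => Measure.measurePreserving_neg μ).measure_preimage
    (measurableSet_negativeWalks m).nullMeasurableSet

theorem measure_strictMinAt_self (m : ℕ) :
    Measure.pi (fun _ => μ) (strictMinAt m m) = Measure.pi (fun _ => μ) (negativeWalks m) := by
  have hrev : (fun x : Fin m → ℝ => fun i => x (Fin.rev i)) ⁻¹' negativeWalks m =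
      strictMinAt m m := by
    ext x
    simp only [Set.mem_preimage, negativeWalks, strictMinAt, Set.mem_ofPred_eq, mem_Icc,
      partialSum_rev, sub_neg]
    refine ⟨fun h j hj hjm => ?_, fun h t ht => h _ (by omega) (by omega)⟩
    simpa [show m - (m - j) = j by omega] using h (m - j) ⟨by omega, by omega⟩
  have hmp : MeasurePreserving (fun x : Fin m → ℝ => fun i => x (Fin.rev i))
      (Measure.pi fun _ => μ) (Measure.pi fun _ => μ) := by
    convert (measurePreserving_piCongrLeft (fun _ : Fin m => μ) Fin.revPerm).symm
      (MeasurableEquiv.piCongrLeft (fun _ => ℝ) Fin.revPerm) using 1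
    funext x
    rfl
  rw [← hrev]
  exact hmp.measure_preimage (measurableSet_negativeWalks m).nullMeasurableSet

theorem measure_strictMinAt_add [μ.IsNegInvariant] (k m : ℕ) :
    Measure.pi (fun _ => μ) (strictMinAt (k + m) k) =
      Measure.pi (fun _ => μ) (negativeWalks k) * Measure.pi (fun _ => μ) (negativeWalks m) := by
  rw [strictMinAt_add, measure_preimage_appendEquiv_symm μ (measurableSet_strictMinAt k k)
    (measurableSet_strictMinAt m 0), measure_strictMinAt_self, measure_strictMinAt_zero]

variable [NullSingletonClass μ]

/-- Splitting off the first `l - 1` coordinates, the set becomes `{x_{l-1} = c}` with `c`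
depending only on the split-off coordinates. -/
theorem measure_partialSum_eq_partialSum {n j l : ℕ} (hjl : j < l) (hl : l ≤ n) :
    Measure.pi (fun _ => μ) {x : Fin n → ℝ | partialSum x j = partialSum x l} = 0 := by
  obtain ⟨a, rfl⟩ : ∃ a, l = a + 1 := ⟨l - 1, by omega⟩
  obtain ⟨m, rfl⟩ : ∃ m, n = a + (m + 1) := ⟨n - a - 1, by omega⟩
  set H : Set ((Fin a → ℝ) × (Fin (m + 1) → ℝ)) :=
    {p | p.2 0 = partialSum p.1 j - partialSum p.1 a} with hH
  have hHmeas : MeasurableSet H := measurableSet_eq_fun (by fun_prop) (by fun_prop)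
  have hset : {x : Fin (a + (m + 1)) → ℝ | partialSum x j = partialSum x (a + 1)} =
      (Fin.appendEquiv a (m + 1)).symm ⁻¹' H := by
    ext x
    have hlast := partialSum_natAdd x 1
    rw [partialSum_one] at hlast
    simp only [Set.mem_preimage, hH, Set.mem_ofPred_eq, Fin.appendEquiv_symm_apply, hlast,
      partialSum_castAdd x (by omega : j ≤ a), partialSum_castAdd x le_rfl]
    constructor <;> intro h <;> linarith
  rw [hset, (measurePreserving_appendEquiv_symm μ a (m + 1)).measure_preimage
    hHmeas.nullMeasurableSet, Measure.prod_apply hHmeas]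
  simp [hH, Measure.pi_hyperplane]

theorem ae_injOn_partialSum (n : ℕ) :
    ∀ᵐ x ∂Measure.pi (fun _ : Fin n => μ), Set.InjOn (partialSum x) (Set.Iic n) := by
  have hne : ∀ j l, j < l → l ≤ n →
      ∀ᵐ x ∂Measure.pi (fun _ : Fin n => μ), partialSum x j ≠ partialSum x l :=
    fun j l hjl hl => measure_eq_zero_iff_ae_notMem.1 (measure_partialSum_eq_partialSum μ hjl hl)
  simp only [Set.InjOn, Set.mem_Iic, ae_all_iff]
  intro j hj l hl
  rcases lt_trichotomy j l with hjl | rfl | hlj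
  · filter_upwards [hne j l hjl hl] with x hx h using absurd h hx
  · exact .of_forall fun _ _ => rfl
  · filter_upwards [hne l j hlj hj] with x hx h using absurd h.symm hx

end SigmaFinite

section Probability

variable (μ : Measure ℝ) [IsProbabilityMeasure μ] [NullSingletonClass μ]

theorem sum_measure_strictMinAt (n : ℕ) :
    ∑ k ∈ range (n + 1), Measure.pi (fun _ => μ) (strictMinAt n k) = 1 := by
  rw [← measure_biUnion_finset (pairwiseDisjoint_strictMinAt n)
    fun k _ => measurableSet_strictMinAt n k, ← mem_ae_iff_prob_eq_one
    (Finset.measurableSet_biUnion _ fun k _ => measurableSet_strictMinAt n k)]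
  filter_upwards [ae_injOn_partialSum μ n] with x hx
  obtain ⟨k, hk, hxk⟩ := exists_mem_strictMinAt hx
  exact Set.mem_biUnion (by simpa [Nat.lt_succ_iff] using hk) hxk

variable [μ.IsNegInvariant]

theorem sum_antidiagonal_measure_negativeWalks (n : ℕ) :
    ∑ ij ∈ antidiagonal n, Measure.pi (fun _ => μ) (negativeWalks ij.1) *
      Measure.pi (fun _ => μ) (negativeWalks ij.2) = 1 := by
  rw [Nat.sum_antidiagonal_eq_sum_range_succ_mk, ← sum_measure_strictMinAt μ n]
  refine sum_congr rfl fun k hk => ?_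
  obtain ⟨m, rfl⟩ : ∃ m, n = k + m := ⟨n - k, by simp at hk; omega⟩
  rw [add_tsub_cancel_left, measure_strictMinAt_add]

theorem measure_negativeWalks (n : ℕ) :
    (Measure.pi (fun _ => μ) (negativeWalks n)).toReal = ((2 * n - 1)‼ / (2 * n)‼ : ℝ) := by
  let q : ℕ → ℝ := fun k => (Measure.pi (fun _ => μ) (negativeWalks k)).toReal
  have hq : ∀ n, ∑ ij ∈ antidiagonal n, q ij.1 * q ij.2 = 1 := fun n => by
    have h := congrArg ENNReal.toReal (sum_antidiagonal_measure_negativeWalks μ n)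
    rw [ENNReal.toReal_sum fun _ _ => ENNReal.mul_ne_top (measure_ne_top _ _)
      (measure_ne_top _ _), ENNReal.toReal_one] at h
    simpa only [q, ENNReal.toReal_mul] using h
  have hq0 : q 0 = 1 := by
    have h : negativeWalks 0 = Set.univ :=
      Set.eq_univ_of_forall fun _ k hk => absurd (mem_Icc.1 hk) (by omega)
    simp [q, h]
  have hratio := eq_of_sum_antidiagonal_mul_self_eq
    (b := fun k => ((2 * k - 1)‼ / (2 * k)‼ : ℝ))
    (fun n => (hq n).trans (sum_antidiagonal_doubleFactorial_ratio n).symm)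
    (by simpa using hq0) (by simp)
  exact congrFun hratio n

end Probability

end RandomWalk

open RandomWalk

theorem persistence_partial_sums_eq_double_factorial_general
    {Ω : Type*} [MeasureSpace Ω] [IsProbabilityMeasure (ℙ : Measure Ω)]
    (n : ℕ)
    (X : ℕ → Ω → ℝ) (hmeas : ∀ i, Measurable (X i))
    (hindep : iIndepFun X ℙ)
    (hid : ∀ i, IdentDistrib (X i) (X 1) ℙ ℙ)
    (hsymm : IdentDistrib (X 1) (fun ω => -X 1 ω) ℙ ℙ)
    (hdens : Measure.map (X 1) ℙ ≪ (volume : Measure ℝ))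
    (S : ℕ → Ω → ℝ) (hS : ∀ k ω, S k ω = ∑ i ∈ Finset.Icc 1 k, X i ω) :
    (ℙ {ω | ∀ k ∈ Finset.Icc 1 n, S k ω < 0}).toReal
        = (Nat.doubleFactorial (2 * n - 1) : ℝ) / (Nat.doubleFactorial (2 * n)) := by
  set μ := (ℙ : Measure Ω).map (X 1)
  have : IsProbabilityMeasure μ := Measure.isProbabilityMeasure_map (hmeas 1).aemeasurable
  have : μ.IsNegInvariant :=
    ⟨by rw [Measure.neg, Measure.map_map measurable_neg (hmeas 1)]; exact hsymm.map_eq.symm⟩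
  have : NullSingletonClass μ := ⟨fun _ => hdens Real.volume_singleton⟩
  set T : Ω → Fin n → ℝ := fun ω i => X (i + 1) ω
  have hT : (ℙ : Measure Ω).map T = Measure.pi fun _ => μ := by
    rw [(hindep.precomp (g := fun i : Fin n => (i : ℕ) + 1) fun i j h => Fin.ext (by simpa using h))
      |>.map_fun_eq_pi_map fun i => (hmeas _).aemeasurable]
    exact congrArg Measure.pi (funext fun i => (hid _).map_eq)
  have hevent : {ω | ∀ k ∈ Icc 1 n, S k ω < 0} = T ⁻¹' negativeWalks n := by
    ext ω
    simp only [Set.mem_ofPred_eq, Set.mem_preimage, negativeWalks, hS]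
    exact forall₂_congr fun k hk => by rw [← partialSum_succ_eq_sum_Icc (X · ω) (mem_Icc.1 hk).2]
  rw [hevent, ← Measure.map_apply (by fun_prop) (measurableSet_negativeWalks n), hT]
  exact measure_negativeWalks μ n

/-- For i.i.d. symmetric mean-zero random variables with a density,
`P(max_{1≤k≤n} S_k < 0) = (2n-1)!!/(2n)!!`. -/
theorem persistence_partial_sums_eq_double_factorial
    {Ω : Type*} [MeasureSpace Ω] [IsProbabilityMeasure (ℙ : Measure Ω)]
    (n : ℕ) (hn : 1 ≤ n)
    (X : ℕ → Ω → ℝ) (hmeas : ∀ i, Measurable (X i))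
    (hindep : iIndepFun X ℙ)
    (hid : ∀ i, IdentDistrib (X i) (X 1) ℙ ℙ)
    (hsymm : IdentDistrib (X 1) (fun ω => -X 1 ω) ℙ ℙ)
    (hint : Integrable (X 1) ℙ)
    (hmean : ∫ ω, X 1 ω = 0)
    (hdens : Measure.map (X 1) ℙ ≪ (volume : Measure ℝ))
    (S : ℕ → Ω → ℝ) (hS : ∀ k ω, S k ω = ∑ i ∈ Finset.Icc 1 k, X i ω) :
    (ℙ {ω | ∀ k ∈ Finset.Icc 1 n, S k ω < 0}).toReal
        = (Nat.doubleFactorial (2 * n - 1) : ℝ) / (Nat.doubleFactorial (2 * n)) :=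
  persistence_partial_sums_eq_double_factorial_general n X hmeas hindep hid hsymm hdens S hS
end

section
/- Let X_1, X_2, ... be i.i.d. symmetric random variables. Define p_k = P(max_{1≤j≤k} S_j < 0) and q_k = P(max_{1≤j≤k} S_j ≤ 0) with p_0 = q_0 = 1, where S_j = X_1+...+X_j. Then for every n ≥ 0, the convolution identity ∑_{k=0}^{n} p_k q_{n-k} = 1 holds. -/
/-!
Split according to the first index `k ≤ n` at which `S₀ = 0, S₁, …, Sₙ` attains its maximum:
this happens iff `S_k` strictly exceeds `S₀, …, S_{k-1}` and dominates `S_{k+1}, …, Sₙ`. The two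
events are determined by the disjoint blocks `X₁, …, X_k` and `X_{k+1}, …, Xₙ`, hence independent.
The second has probability `q_{n-k}` by stationarity of the increments; the first has probability
`p_k` because `(X₁, …, X_k) ↦ (-X_k, …, -X₁)` preserves the joint law of i.i.d. symmetric variables
and maps it onto the event `S₁, …, S_k < 0`.
-/

open MeasureTheory ProbabilityTheory Finset

lemma ProbabilityTheory.iIndepFun.identDistrib_pi {Ω ι : Type*} [MeasurableSpace Ω]
    {P : Measure Ω} [IsProbabilityMeasure P] {β : ι → Type*} [∀ i, MeasurableSpace (β i)]
    {Y Z : ∀ i, Ω → β i} (hY : ∀ i, Measurable (Y i)) (hZ : ∀ i, Measurable (Z i))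
    (hYi : iIndepFun Y P) (hZi : iIndepFun Z P) (h : ∀ i, IdentDistrib (Y i) (Z i) P P) :
    IdentDistrib (fun ω i => Y i ω) (fun ω i => Z i ω) P P where
  aemeasurable_fst := (measurable_pi_lambda _ hY).aemeasurable
  aemeasurable_snd := (measurable_pi_lambda _ hZ).aemeasurable
  map_eq := by
    rw [hYi.map_fun_eq_infinitePi_map hY, hZi.map_fun_eq_infinitePi_map hZ]
    simp only [fun i => (h i).map_eq]

lemma Finset.sum_Ioc_add_eq_sum_range {M : Type*} [AddCommMonoid M] (f : ℕ → M) (a m : ℕ) :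
    ∑ i ∈ Ioc a (a + m), f i = ∑ i ∈ range m, f (a + 1 + i) := by
  induction m with
  | zero => simp
  | succ m ih =>
    rw [← add_assoc, sum_Ioc_succ_top (by omega), ih, sum_range_succ, add_right_comm]

lemma Finset.sum_Ioc_sub_eq_sum_range {M : Type*} [AddCommMonoid M] (f : ℕ → M) {a m : ℕ}
    (h : m ≤ a) : ∑ i ∈ Ioc (a - m) a, f i = ∑ i ∈ range m, f (a - i) := by
  have hIoc : Ioc (a - m) a = Ioc (a - m) (a - m + m) := by rw [Nat.sub_add_cancel h]
  rw [hIoc, sum_Ioc_add_eq_sum_range, ← sum_range_reflect]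
  refine sum_congr rfl fun i hi => congrArg f ?_
  have := mem_range.1 hi
  omega

lemma existsUnique_first_argmax (s : ℕ → ℝ) (n : ℕ) :
    ∃! k, k ≤ n ∧ (∀ j ∈ Icc 1 k, s (k - j) < s k) ∧ ∀ j ∈ Icc 1 (n - k), s (k + j) ≤ s k := by
  classical
  have not_both : ∀ k l, k < l → l ≤ n → (∀ j ∈ Icc 1 (n - k), s (k + j) ≤ s k) →
      (∀ j ∈ Icc 1 l, s (l - j) < s l) → False := by
    intro k l hkl hln hk hl
    have h₁ := hk (l - k) (mem_Icc.2 (by omega))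
    have h₂ := hl (l - k) (mem_Icc.2 (by omega))
    rw [Nat.add_sub_cancel' hkl.le] at h₁
    rw [Nat.sub_sub_self hkl.le] at h₂
    linarith
  have hmax : ∃ k, k ≤ n ∧ ∀ j ≤ n, s j ≤ s k := by
    obtain ⟨k, hk, hmax⟩ := (range (n + 1)).exists_max_image s nonempty_range_add_one
    exact ⟨k, Nat.lt_succ_iff.1 (mem_range.1 hk),
      fun j hj => hmax j (mem_range.2 (Nat.lt_succ_of_le hj))⟩
  set k := Nat.find hmax
  obtain ⟨hkn, hk⟩ : k ≤ n ∧ ∀ j ≤ n, s j ≤ s k := Nat.find_spec hmax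
  have hkpast : ∀ j ∈ Icc 1 k, s (k - j) < s k := by
    intro j hj
    have hj := mem_Icc.1 hj
    refine lt_of_not_ge fun hle => Nat.find_min hmax (m := k - j) (by omega) ?_
    exact ⟨by omega, fun i hi => (hk i hi).trans hle⟩
  have hkfut : ∀ j ∈ Icc 1 (n - k), s (k + j) ≤ s k := fun j hj => hk _ (by grind)
  refine ⟨k, ⟨hkn, hkpast, hkfut⟩, ?_⟩
  rintro l ⟨hln, hlpast, hlfut⟩
  rcases lt_trichotomy l k with hlt | heq | hgt
  · exact (not_both l k hlt hkn hlfut hkpast).elim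
  · exact heq
  · exact (not_both k l hgt hln hkfut hlpast).elim

section PartialSums

variable {Ω : Type*} {X S : ℕ → Ω → ℝ}

lemma walk_sub_eq_sum_Ioc (hS : ∀ k ω, S k ω = ∑ i ∈ Icc 1 k, X i ω) {a b : ℕ} (hab : a ≤ b)
    (ω : Ω) : S b ω - S a ω = ∑ i ∈ Ioc a b, X i ω := by
  simp only [hS, show ∀ c, Icc 1 c = Ioc 0 c from Icc_add_one_left_eq_Ioc 0]
  rw [sub_eq_iff_eq_add', sum_Ioc_consecutive _ (Nat.zero_le a) hab]

lemma walk_add_sub_eq_sum_range (hS : ∀ k ω, S k ω = ∑ i ∈ Icc 1 k, X i ω) (a m : ℕ) (ω : Ω) :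
    S (a + m) ω - S a ω = ∑ i ∈ range m, X (a + 1 + i) ω := by
  rw [walk_sub_eq_sum_Ioc hS (Nat.le_add_right a m), sum_Ioc_add_eq_sum_range]

lemma walk_sub_sub_eq_sum_range (hS : ∀ k ω, S k ω = ∑ i ∈ Icc 1 k, X i ω) {a m : ℕ} (hm : m ≤ a)
    (ω : Ω) : S a ω - S (a - m) ω = ∑ i ∈ range m, X (a - i) ω := by
  rw [walk_sub_eq_sum_Ioc hS (Nat.sub_le a m), sum_Ioc_sub_eq_sum_range _ hm]

lemma walk_eq_sum_range (hS : ∀ k ω, S k ω = ∑ i ∈ Icc 1 k, X i ω) (m : ℕ) (ω : Ω) :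
    S m ω = ∑ i ∈ range m, X (i + 1) ω := by
  simpa [hS, add_comm] using walk_add_sub_eq_sum_range hS 0 m ω

lemma measurable_walk_sub_iSup_comap (hS : ∀ k ω, S k ω = ∑ i ∈ Icc 1 k, X i ω) {s : Set ℕ}
    {a b : ℕ} (hab : a ≤ b) (hs : ∀ i ∈ Ioc a b, i ∈ s) :
    Measurable[⨆ i ∈ s, MeasurableSpace.comap (X i) inferInstance] fun ω => S b ω - S a ω := by
  simp_rw [walk_sub_eq_sum_Ioc hS hab]
  exact Finset.measurable_sum _ fun i hi => (comap_measurable (X i)).mono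
    (le_iSup₂ (f := fun i (_ : i ∈ s) => MeasurableSpace.comap (X i) inferInstance) i (hs i hi))
    le_rfl

end PartialSums

section RandomWalk

variable {Ω : Type*} [MeasurableSpace Ω] {P : Measure Ω} {X S : ℕ → Ω → ℝ}

lemma sum_measure_first_argmax_eq_one [IsProbabilityMeasure P] (hS : ∀ j, Measurable (S j))
    (n : ℕ) :
    ∑ k ∈ range (n + 1), P ({ω | ∀ j ∈ Icc 1 k, S (k - j) ω < S k ω} ∩
      {ω | ∀ j ∈ Icc 1 (n - k), S (k + j) ω ≤ S k ω}) = 1 := by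
  rw [← measure_biUnion_finset ?_ fun k _ => ?_, ← measure_univ (μ := P)]
  · congr 1
    refine Set.eq_univ_of_forall fun ω => ?_
    obtain ⟨k, ⟨hkn, hk⟩, -⟩ := existsUnique_first_argmax (S · ω) n
    exact Set.mem_biUnion (mem_range.2 (Nat.lt_succ_of_le hkn)) hk
  · intro k hk l hl hkl
    refine Set.disjoint_left.2 fun ω hωk hωl => hkl ?_
    exact (existsUnique_first_argmax (S · ω) n).unique
      ⟨Nat.lt_succ_iff.1 (mem_range.1 hk), hωk⟩ ⟨Nat.lt_succ_iff.1 (mem_range.1 hl), hωl⟩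
  · simp only [Set.ofPred_forall]
    exact ((Icc 1 k).measurableSet_biInter fun j _ => measurableSet_lt (hS _) (hS _)).inter
      ((Icc 1 (n - k)).measurableSet_biInter fun j _ => measurableSet_le (hS _) (hS _))

lemma measure_strict_record_inter_stays_below (hX : ∀ i, Measurable (X i))
    (hindep : iIndepFun X P) (hS : ∀ k ω, S k ω = ∑ i ∈ Icc 1 k, X i ω) (k m : ℕ) :
    P ({ω | ∀ j ∈ Icc 1 k, S (k - j) ω < S k ω} ∩ {ω | ∀ j ∈ Icc 1 m, S (k + j) ω ≤ S k ω}) =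
      P {ω | ∀ j ∈ Icc 1 k, S (k - j) ω < S k ω} * P {ω | ∀ j ∈ Icc 1 m, S (k + j) ω ≤ S k ω} := by
  have hind := indep_iSup_of_disjoint (fun i => (hX i).comap_le) hindep.iIndep
    (Set.Iic_disjoint_Ioi le_rfl : Disjoint (Set.Iic k) (Set.Ioi k))
  refine (Indep_iff _ _ P).1 hind _ _ ?_ ?_ <;> simp only [Set.ofPred_forall]
  · refine (Icc 1 k).measurableSet_biInter fun j _ => ?_
    simpa only [sub_pos] using measurableSet_lt (measurable_const (a := (0 : ℝ)))
      (measurable_walk_sub_iSup_comap hS (s := Set.Iic k) (Nat.sub_le k j)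
        fun i hi => (mem_Ioc.1 hi).2)
  · refine (Icc 1 m).measurableSet_biInter fun j _ => ?_
    simpa only [sub_nonpos] using measurableSet_le
      (measurable_walk_sub_iSup_comap hS (s := Set.Ioi k) (Nat.le_add_right k j)
        fun i hi => (mem_Ioc.1 hi).1)
      (measurable_const (a := (0 : ℝ)))

lemma measure_forall_sum_range_mem_eq [IsProbabilityMeasure P] {Y Z : ℕ → Ω → ℝ}
    (hY : ∀ i, Measurable (Y i)) (hZ : ∀ i, Measurable (Z i)) (hYi : iIndepFun Y P)
    (hZi : iIndepFun Z P) (h : ∀ i, IdentDistrib (Y i) (Z i) P P) {r : Set ℝ}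
    (hr : MeasurableSet r) (s : Finset ℕ) :
    P {ω | ∀ j ∈ s, ∑ i ∈ range j, Y i ω ∈ r} = P {ω | ∀ j ∈ s, ∑ i ∈ range j, Z i ω ∈ r} := by
  refine (hYi.identDistrib_pi hY hZ hZi h).measure_mem_eq
    (s := {x : ℕ → ℝ | ∀ j ∈ s, ∑ i ∈ range j, x i ∈ r}) ?_
  simp only [Set.ofPred_forall]
  exact s.measurableSet_biInter fun j _ =>
    (Finset.measurable_sum _ fun i _ => measurable_pi_apply i) hr

lemma measure_stays_below_eq [IsProbabilityMeasure P] (hX : ∀ i, Measurable (X i))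
    (hindep : iIndepFun X P) (hid : ∀ i, IdentDistrib (X i) (X 1) P P)
    (hS : ∀ k ω, S k ω = ∑ i ∈ Icc 1 k, X i ω) (k m : ℕ) :
    P {ω | ∀ j ∈ Icc 1 m, S (k + j) ω ≤ S k ω} = P {ω | ∀ j ∈ Icc 1 m, S j ω ≤ 0} :=
  calc P {ω | ∀ j ∈ Icc 1 m, S (k + j) ω ≤ S k ω}
      = P {ω | ∀ j ∈ Icc 1 m, ∑ i ∈ range j, X (k + 1 + i) ω ∈ Set.Iic 0} := by
        simp only [Set.mem_Iic, ← walk_add_sub_eq_sum_range hS, sub_nonpos]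
    _ = P {ω | ∀ j ∈ Icc 1 m, ∑ i ∈ range j, X (i + 1) ω ∈ Set.Iic 0} :=
        measure_forall_sum_range_mem_eq (fun _ => hX _) (fun _ => hX _)
          (hindep.precomp (add_right_injective (k + 1))) (hindep.precomp (add_left_injective 1))
          (fun _ => (hid _).trans (hid _).symm) measurableSet_Iic _
    _ = P {ω | ∀ j ∈ Icc 1 m, S j ω ≤ 0} := by simp only [Set.mem_Iic, ← walk_eq_sum_range hS]

lemma measure_strict_record_eq [IsProbabilityMeasure P] (hX : ∀ i, Measurable (X i))
    (hindep : iIndepFun X P) (hid : ∀ i, IdentDistrib (X i) (X 1) P P)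
    (hsymm : IdentDistrib (X 1) (fun ω => -X 1 ω) P P)
    (hS : ∀ k ω, S k ω = ∑ i ∈ Icc 1 k, X i ω) (k : ℕ) :
    P {ω | ∀ j ∈ Icc 1 k, S (k - j) ω < S k ω} = P {ω | ∀ j ∈ Icc 1 k, S j ω < 0} := by
  -- `g` reverses `1, …, k`; its other values only serve to keep it injective.
  set g : ℕ → ℕ := fun i => if i < k then k - i else i + 1
  have hg : g.Injective := by
    intro i i' h
    simp only [g] at h
    split_ifs at h <;> omega
  have hreflect : ∀ ω, ∀ j ∈ Icc 1 k, ∑ i ∈ range j, -X (g i) ω = S (k - j) ω - S k ω := by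
    intro ω j hj
    have hjk := (mem_Icc.1 hj).2
    rw [sum_neg_distrib, neg_eq_iff_eq_neg, neg_sub, walk_sub_sub_eq_sum_range hS hjk]
    exact sum_congr rfl fun i hi => by simp only [g, if_pos ((mem_range.1 hi).trans_le hjk)]
  calc P {ω | ∀ j ∈ Icc 1 k, S (k - j) ω < S k ω}
      = P {ω | ∀ j ∈ Icc 1 k, ∑ i ∈ range j, -X (g i) ω ∈ Set.Iio 0} := by
        congr 1
        ext ω
        exact forall₂_congr fun j hj => by rw [Set.mem_Iio, hreflect ω j hj, sub_neg]
    _ = P {ω | ∀ j ∈ Icc 1 k, ∑ i ∈ range j, X (i + 1) ω ∈ Set.Iio 0} :=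
        measure_forall_sum_range_mem_eq (fun _ => (hX _).neg) (fun _ => hX _)
          ((hindep.precomp hg).comp (fun _ => Neg.neg) fun _ => measurable_neg)
          (hindep.precomp (add_left_injective 1))
          (fun _ => ((hid _).comp measurable_neg).trans (hsymm.symm.trans (hid _).symm))
          measurableSet_Iio _
    _ = P {ω | ∀ j ∈ Icc 1 k, S j ω < 0} := by simp only [Set.mem_Iio, ← walk_eq_sum_range hS]

end RandomWalk

/-- For i.i.d. symmetric random variables, with
`p_k = P(max_{1≤j≤k} S_j < 0)`, `q_k = P(max_{1≤j≤k} S_j ≤ 0)` (and `p_0 = q_0 = 1`),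
the convolution identity `∑_{k=0}^n p_k q_{n-k} = 1` holds for every `n ≥ 0`. -/
theorem persistence_convolution_identity
    {Ω : Type*} [MeasureSpace Ω] [IsProbabilityMeasure (ℙ : Measure Ω)]
    (X : ℕ → Ω → ℝ) (hmeas : ∀ i, Measurable (X i))
    (hindep : iIndepFun X ℙ)
    (hid : ∀ i, IdentDistrib (X i) (X 1) ℙ ℙ)
    (hsymm : IdentDistrib (X 1) (fun ω => -X 1 ω) ℙ ℙ)
    (S : ℕ → Ω → ℝ) (hS : ∀ k ω, S k ω = ∑ i ∈ Finset.Icc 1 k, X i ω)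
    (p q : ℕ → ℝ)
    (hp : ∀ k, p k = (ℙ {ω | ∀ j ∈ Finset.Icc 1 k, S j ω < 0}).toReal)
    (hq : ∀ k, q k = (ℙ {ω | ∀ j ∈ Finset.Icc 1 k, S j ω ≤ 0}).toReal)
    (n : ℕ) :
    ∑ k ∈ Finset.range (n + 1), p k * q (n - k) = 1 := by
  have hSmeas : ∀ j, Measurable (S j) := fun j => by
    rw [funext (walk_eq_sum_range hS j)]
    exact Finset.measurable_sum _ fun i _ => hmeas _
  rw [← ENNReal.toReal_one, ← sum_measure_first_argmax_eq_one (P := ℙ) hSmeas n,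
    ENNReal.toReal_sum fun _ _ => measure_ne_top _ _]
  refine sum_congr rfl fun k _ => ?_
  rw [measure_strict_record_inter_stays_below hmeas hindep hS, ENNReal.toReal_mul, hp, hq,
    measure_strict_record_eq hmeas hindep hid hsymm hS, measure_stays_below_eq hmeas hindep hid hS]
end

section
/- Let X_1, ..., X_n be i.i.d. integrable random variables with mean zero and E|X_1| = 1, and let S_k = X_1+...+X_k, S_k^{(2)} = S_1+...+S_k. Define p_k = P(max_{1≤j≤k} S_j^{(2)} < 0) and q_k = P(max_{1≤j≤k} S_j^{(2)} ≤ 0) with p_0 = q_0 = 1. Then for n > 2, ∑_{k=0}^{n-2} p_k q_{n-2-k} ≤ 2 E[A_{n-1} - B_{n-1}], where A_m = max_{1≤k≤m}(-S_{k+1}) and B_m = -max_{1≤k≤m} S_k. -/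
/-!
Fix a pivot `k ≤ n - 2` and weight it by `X_{k+2}⁻` on the event that the iterated walk built
from `X_{k+1}, …, X_2` (read backwards) stays `≤ 0` for `k` steps and the one built from
`X_{k+3}, …, X_n` stays `≤ 0` for `n - 2 - k` steps. The three blocks are independent, by
exchangeability the two events have probabilities `q_k` and `q_{n-2-k}`, and
`E X⁻ = (E|X| - E X) / 2 = 1 / 2`, so the expected weight is `q_k q_{n-2-k} / 2`.
Pathwise, a positive weight is the length of `[-S_{k+1}, -S_{k+2}]`; the two persistence
conditions force these intervals to be non-overlapping and ordered by `k`, and they lie in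
`[B, A]`, so the weights sum to at most `A - B`. Finally `p_k ≤ q_k`.
-/

open MeasureTheory ProbabilityTheory Finset

def partialSum (x : ℕ → ℝ) (k : ℕ) : ℝ := ∑ i ∈ Icc 1 k, x i

def iterSum (x : ℕ → ℝ) (k : ℕ) : ℝ := ∑ j ∈ Icc 1 k, partialSum x j

section Deterministic

variable (x : ℕ → ℝ)

@[simp] lemma partialSum_zero : partialSum x 0 = 0 := by simp [partialSum]

lemma partialSum_succ (k : ℕ) : partialSum x (k + 1) = partialSum x k + x (k + 1) :=
  sum_Icc_succ_top (by omega) _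

@[simp] lemma iterSum_zero : iterSum x 0 = 0 := by simp [iterSum]

lemma iterSum_succ (k : ℕ) : iterSum x (k + 1) = iterSum x k + partialSum x (k + 1) :=
  sum_Icc_succ_top (by omega) _

lemma partialSum_shift (a t : ℕ) :
    partialSum (x ∘ (a + ·)) t = partialSum x (a + t) - partialSum x a := by
  induction t with
  | zero => simp
  | succ t ih =>
    rw [partialSum_succ, ih, Function.comp_apply, ← add_assoc, partialSum_succ]; ring

lemma iterSum_shift (a s : ℕ) :
    iterSum (x ∘ (a + ·)) s = iterSum x (a + s) - iterSum x a - s * partialSum x a := by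
  induction s with
  | zero => simp
  | succ s ih =>
    rw [iterSum_succ, ih, partialSum_shift, ← add_assoc, iterSum_succ]; push_cast; ring

lemma partialSum_reflect {c t : ℕ} (ht : t ≤ c + 1) :
    partialSum (x ∘ (c + 2 - ·)) t = partialSum x (c + 1) - partialSum x (c + 1 - t) := by
  induction t with
  | zero => simp
  | succ t ih =>
    have h := partialSum_succ x (c + 1 - (t + 1))
    rw [show c + 1 - (t + 1) + 1 = c + 1 - t by omega] at h
    rw [partialSum_succ, ih (by omega), Function.comp_apply,
      show c + 2 - (t + 1) = c + 1 - t by omega]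
    linarith

lemma iterSum_reflect {c s : ℕ} (hs : s ≤ c) :
    iterSum (x ∘ (c + 2 - ·)) s
      = s * partialSum x (c + 1) - (iterSum x c - iterSum x (c - s)) := by
  induction s with
  | zero => simp
  | succ s ih =>
    have h := iterSum_succ x (c - (s + 1))
    rw [show c - (s + 1) + 1 = c - s by omega] at h
    rw [iterSum_succ, ih (by omega), partialSum_reflect x (by omega),
      show c + 1 - (s + 1) = c - s by omega]
    push_cast
    linarith

end Deterministic

def persistSet (m : ℕ) : Set (ℕ → ℝ) := {x | ∀ s ∈ Icc 1 m, iterSum x s ≤ 0}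

lemma iterSum_nonpos_of_mem_persistSet {x : ℕ → ℝ} {m s : ℕ} (hx : x ∈ persistSet m)
    (hs : s ≤ m) : iterSum x s ≤ 0 := by
  rcases Nat.eq_zero_or_pos s with rfl | hs0
  · simp
  · exact hx s (mem_Icc.mpr ⟨hs0, hs⟩)

/- With `S = partialSum x`, `T = iterSum x` and `k' = k + 1 + s`, the future condition at `k`
gives `T (k' + 1) - T (k + 2) ≤ s * S (k + 2)`, the past condition at `k'` gives
`s * S (k' + 1) ≤ T k' - T (k + 1)`, and `T` increases by `S` at each step. -/
lemma partialSum_le_of_mem_persistSet {x : ℕ → ℝ} {k k' m : ℕ} (hkk' : k < k')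
    (hk' : k' ≤ k + 1 + m) (hfwd : x ∘ (k + 2 + ·) ∈ persistSet m)
    (hbwd : x ∘ (k' + 2 - ·) ∈ persistSet k') :
    partialSum x (k' + 1) ≤ partialSum x (k + 2) := by
  obtain ⟨s, rfl⟩ : ∃ s, k' = k + 1 + s := ⟨k' - k - 1, by omega⟩
  have hf := iterSum_nonpos_of_mem_persistSet hfwd (s := s) (by omega)
  have hb := iterSum_nonpos_of_mem_persistSet hbwd (s := s) (by omega)
  rw [iterSum_shift, show k + 2 + s = k + 1 + s + 1 by omega] at hf
  rw [iterSum_reflect x (by omega), show k + 1 + s - s = k + 1 by omega] at hb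
  have h₁ := iterSum_succ x (k + 1 + s)
  have h₂ := iterSum_succ x (k + 1)
  refine le_of_mul_le_mul_left (a := (s : ℝ) + 1) ?_ (by positivity)
  linarith

theorem Finset.sum_le_sub_of_ordered_intervals {α : Type*} [LinearOrder α] {s : Finset α}
    {ℓ lo hi : α → ℝ} {a b : ℝ} (hℓ : ∀ j ∈ s, 0 ≤ ℓ j)
    (hlen : ∀ j ∈ s, 0 < ℓ j → ℓ j ≤ hi j - lo j)
    (hlo : ∀ j ∈ s, 0 < ℓ j → a ≤ lo j) (hhi : ∀ j ∈ s, 0 < ℓ j → hi j ≤ b)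
    (hord : ∀ j ∈ s, ∀ j' ∈ s, j < j' → 0 < ℓ j → 0 < ℓ j' → hi j ≤ lo j') (hab : a ≤ b) :
    ∑ j ∈ s, ℓ j ≤ b - a := by
  induction s using Finset.induction_on_min generalizing a with
  | empty => simpa
  | insert j t hjt ih =>
    have hj : j ∉ t := fun h => lt_irrefl j (hjt j h)
    rw [sum_insert hj]
    have ht : ∀ i ∈ t, i ∈ insert j t := fun i => mem_insert_of_mem
    rcases (hℓ j (mem_insert_self j t)).lt_or_eq with hpos | hzero
    · have := ih (a := hi j) (fun i hi => hℓ i (ht i hi)) (fun i hi => hlen i (ht i hi))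
        (fun i hi hℓi => hord j (mem_insert_self j t) i (ht i hi) (hjt i hi) hpos hℓi)
        (fun i hi => hhi i (ht i hi)) (fun i hi i' hi' => hord i (ht i hi) i' (ht i' hi'))
        (hhi j (mem_insert_self j t) hpos)
      linarith [hlen j (mem_insert_self j t) hpos, hlo j (mem_insert_self j t) hpos]
    · rw [← hzero, zero_add]
      exact ih (fun i hi => hℓ i (ht i hi)) (fun i hi => hlen i (ht i hi))
        (fun i hi => hlo i (ht i hi)) (fun i hi => hhi i (ht i hi))
        (fun i hi i' hi' => hord i (ht i hi) i' (ht i' hi')) hab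

/- `x ∘ (k + 2 - ·)` reads `x (k + 1), x k, …, x 2` and `x ∘ (k + 2 + ·)` reads
`x (k + 3), x (k + 4), …` (`persistSet` never looks at index `0`). A positive weight is the
length of the interval `[-S (k + 1), -S (k + 2)]`. -/
noncomputable def pivotWeight (k m : ℕ) (x : ℕ → ℝ) : ℝ :=
  (persistSet k).indicator 1 (x ∘ (k + 2 - ·)) *
    ((x (k + 2))⁻ * (persistSet m).indicator 1 (x ∘ (k + 2 + ·)))

lemma pivotWeight_nonneg (k m : ℕ) (x : ℕ → ℝ) : 0 ≤ pivotWeight k m x := by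
  have hind (P : Set (ℕ → ℝ)) (y : ℕ → ℝ) : (0 : ℝ) ≤ P.indicator 1 y :=
    Set.indicator_nonneg (fun _ _ => zero_le_one) y
  exact mul_nonneg (hind _ _) (mul_nonneg (negPart_nonneg _) (hind _ _))

lemma pivotWeight_eq_of_pos {k m : ℕ} {x : ℕ → ℝ} (h : 0 < pivotWeight k m x) :
    x ∘ (k + 2 - ·) ∈ persistSet k ∧ x ∘ (k + 2 + ·) ∈ persistSet m ∧
      pivotWeight k m x = -x (k + 2) := by
  unfold pivotWeight at *
  by_cases hb : x ∘ (k + 2 - ·) ∈ persistSet k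
  · by_cases hf : x ∘ (k + 2 + ·) ∈ persistSet m
    · simp only [Set.indicator_of_mem hb, Set.indicator_of_mem hf, Pi.one_apply, one_mul,
        mul_one] at h ⊢
      exact ⟨hb, hf, negPart_eq_neg.mpr (negPart_pos_iff.mp h).le⟩
    · simp [Set.indicator_of_notMem hf] at h
  · simp [Set.indicator_of_notMem hb] at h

theorem sum_pivotWeight_le (x : ℕ → ℝ) {n : ℕ} (hn : 2 < n) (hne : (Icc 1 (n - 1)).Nonempty) :
    ∑ k ∈ range (n - 1), pivotWeight k (n - 2 - k) x
      ≤ (Icc 1 (n - 1)).sup' hne (fun k => -partialSum x (k + 1))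
        - -(Icc 1 (n - 1)).sup' hne (fun k => partialSum x k) := by
  have hmem : ∀ k ∈ range (n - 1), k + 1 ∈ Icc 1 (n - 1) := fun k hk => by
    simp only [mem_range] at hk; simp only [mem_Icc]; omega
  refine sum_le_sub_of_ordered_intervals (lo := fun k => -partialSum x (k + 1))
    (hi := fun k => -partialSum x (k + 2)) (fun k _ => pivotWeight_nonneg _ _ _) ?_ ?_ ?_ ?_ ?_
  · intro k _ hk
    rw [(pivotWeight_eq_of_pos hk).2.2, partialSum_succ x (k + 1)]
    linarith
  · intro k hk _
    linarith [le_sup' (fun i => partialSum x i) (hmem k hk)]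
  · intro k hk _
    exact le_sup' (fun i => -partialSum x (i + 1)) (hmem k hk)
  · intro k hk k' hk' hkk' hℓ hℓ'
    simp only [mem_range] at hk'
    exact neg_le_neg (partialSum_le_of_mem_persistSet hkk' (by omega)
      (pivotWeight_eq_of_pos hℓ).2.1 (pivotWeight_eq_of_pos hℓ').1)
  · have h2 : 2 ∈ Icc 1 (n - 1) := by simp only [mem_Icc]; omega
    have h1 : 1 ∈ Icc 1 (n - 1) := by simp only [mem_Icc]; omega
    linarith [le_sup' (fun i => partialSum x i) h2, le_sup' (fun i => -partialSum x (i + 1)) h1]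

lemma abs_pivotWeight_le (k m : ℕ) (x : ℕ → ℝ) : |pivotWeight k m x| ≤ |x (k + 2)| := by
  have hind (P : Set (ℕ → ℝ)) (y : ℕ → ℝ) : |P.indicator (1 : (ℕ → ℝ) → ℝ) y| ≤ 1 := by
    by_cases h : y ∈ P <;> simp [h]
  rw [pivotWeight, abs_mul, abs_mul, abs_of_nonneg (negPart_nonneg _)]
  calc _ ≤ 1 * ((x (k + 2))⁻ * 1) := by gcongr <;> exact hind _ _
    _ ≤ |x (k + 2)| := by
      rw [← negPart_add_posPart]; linarith [posPart_nonneg (x (k + 2))]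

lemma DependsOn.eq_updateFinset_restrict {ι β γ : Type*} [DecidableEq ι] {F : (ι → β) → γ}
    {s : Finset ι} (hF : DependsOn F s) (x₀ x : ι → β) :
    F x = F (Function.updateFinset x₀ s (s.restrict x)) :=
  hF fun i hi => by simp [Function.updateFinset, Finset.mem_coe.mp hi]

lemma DependsOn.comp_right {ι β γ : Type*} {F : (ι → β) → γ} {s : Set ι} (hF : DependsOn F s)
    (κ : ι → ι) : DependsOn (fun x => F (x ∘ κ)) (κ '' s) :=
  fun _ _ h => hF fun i hi => h (κ i) (Set.mem_image_of_mem κ hi)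

lemma DependsOn.mul {ι β M : Type*} [Mul M] {f g : (ι → β) → M} {s t : Set ι}
    (hf : DependsOn f s) (hg : DependsOn g t) : DependsOn (fun x => f x * g x) (s ∪ t) :=
  fun _ _ h => congr_arg₂ (· * ·) (hf fun i hi => h i (Or.inl hi)) (hg fun i hi => h i (Or.inr hi))

namespace ProbabilityTheory

variable {Ω ι β : Type*} [MeasurableSpace Ω] [MeasurableSpace β] {μ : Measure Ω}
  {X : ι → Ω → β}

theorem iIndepFun.indepFun_comp_of_dependsOn [Nonempty β] {γ δ : Type*} [MeasurableSpace γ]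
    [MeasurableSpace δ] (hX : iIndepFun X μ) (hmeas : ∀ i, Measurable (X i)) {s t : Finset ι}
    (hst : Disjoint s t) {F : (ι → β) → γ} {G : (ι → β) → δ} (hF : Measurable F)
    (hG : Measurable G) (hFs : DependsOn F s) (hGt : DependsOn G t) :
    IndepFun (fun ω => F (X · ω)) (fun ω => G (X · ω)) μ := by
  classical
  let x₀ : ι → β := fun _ => Classical.arbitrary β
  convert (hX.indepFun_finset s t hst hmeas).comp (hF.comp (measurable_updateFinset (x := x₀)))
    (hG.comp (measurable_updateFinset (x := x₀))) using 1 <;> funext ω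
  · exact hFs.eq_updateFinset_restrict x₀ _
  · exact hGt.eq_updateFinset_restrict x₀ _

theorem iIndepFun.identDistrib_comp_injective {ι' : Type*} [Fintype ι'] (hX : iIndepFun X μ)
    (hmeas : ∀ i, Measurable (X i)) {i₀ : ι} (hid : ∀ i, IdentDistrib (X i) (X i₀) μ μ)
    {κ κ' : ι' → ι} (hκ : κ.Injective) (hκ' : κ'.Injective) :
    IdentDistrib (fun ω i => X (κ i) ω) (fun ω i => X (κ' i) ω) μ μ where
  aemeasurable_fst := (measurable_pi_lambda _ fun i => hmeas (κ i)).aemeasurable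
  aemeasurable_snd := (measurable_pi_lambda _ fun i => hmeas (κ' i)).aemeasurable
  map_eq := by
    rw [(hX.precomp hκ).map_fun_eq_pi_map fun i => (hmeas _).aemeasurable,
      (hX.precomp hκ').map_fun_eq_pi_map fun i => (hmeas _).aemeasurable]
    congr with i : 1
    exact ((hid _).trans (hid _).symm).map_eq

theorem iIndepFun.measure_comp_mem_eq [Nonempty β] (hX : iIndepFun X μ)
    (hmeas : ∀ i, Measurable (X i)) {i₀ : ι} (hid : ∀ i, IdentDistrib (X i) (X i₀) μ μ)
    {s : Finset ι} {κ : ι → ι} (hκ : Set.InjOn κ s) {P : Set (ι → β)} (hP : MeasurableSet P)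
    (hPs : DependsOn (· ∈ P) s) :
    μ {ω | (X · ω) ∘ κ ∈ P} = μ {ω | (X · ω) ∈ P} := by
  classical
  let x₀ : ι → β := fun _ => Classical.arbitrary β
  have hsame := (hX.identDistrib_comp_injective hmeas hid hκ.injective
    Subtype.val_injective).measure_mem_eq (hP.preimage (measurable_updateFinset (s := s) (x := x₀)))
  convert hsame using 2 <;> ext ω <;> exact iff_of_eq (hPs.eq_updateFinset_restrict x₀ _)

theorem iIndepFun.integral_mul_mul_of_dependsOn [Nonempty β] (hX : iIndepFun X μ)
    (hmeas : ∀ i, Measurable (X i)) {s t u : Finset ι} (hst : Disjoint s t) (hsu : Disjoint s u)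
    (htu : Disjoint t u) {F G H : (ι → β) → ℝ} (hF : Measurable F) (hG : Measurable G)
    (hH : Measurable H) (hFs : DependsOn F s) (hGt : DependsOn G t) (hHu : DependsOn H u) :
    ∫ ω, F (X · ω) * (G (X · ω) * H (X · ω)) ∂μ
      = (∫ ω, F (X · ω) ∂μ) * ((∫ ω, G (X · ω) ∂μ) * ∫ ω, H (X · ω) ∂μ) := by
  classical
  have hFX : Measurable fun ω => F (X · ω) := hF.comp (measurable_pi_lambda _ hmeas)
  have hGX : Measurable fun ω => G (X · ω) := hG.comp (measurable_pi_lambda _ hmeas)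
  have hHX : Measurable fun ω => H (X · ω) := hH.comp (measurable_pi_lambda _ hmeas)
  have hGHtu : DependsOn (fun x => G x * H x) ↑(t ∪ u) := by
    rw [coe_union]; exact hGt.mul hHu
  calc ∫ ω, F (X · ω) * (G (X · ω) * H (X · ω)) ∂μ
      = (∫ ω, F (X · ω) ∂μ) * ∫ ω, G (X · ω) * H (X · ω) ∂μ :=
        (hX.indepFun_comp_of_dependsOn (G := fun x => G x * H x) hmeas
          (disjoint_union_right.mpr ⟨hst, hsu⟩) hF (hG.mul hH) hFs
          hGHtu).integral_fun_mul_eq_mul_integral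
            hFX.aestronglyMeasurable (hGX.mul hHX).aestronglyMeasurable
    _ = _ := by
        rw [(hX.indepFun_comp_of_dependsOn hmeas htu hG hH hGt hHu).integral_fun_mul_eq_mul_integral
          hGX.aestronglyMeasurable hHX.aestronglyMeasurable]

end ProbabilityTheory

theorem MeasureTheory.Integrable.finset_sup' {Ω ι : Type*} [MeasurableSpace Ω] {μ : Measure Ω}
    {s : Finset ι} (hs : s.Nonempty) {f : ι → Ω → ℝ} (hf : ∀ i ∈ s, Integrable (f i) μ) :
    Integrable (fun ω => s.sup' hs (f · ω)) μ := by
  convert sup'_induction (p := fun g => Integrable g μ) hs f (fun _ h₁ _ h₂ => h₁.sup h₂) hf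
    using 1
  exact funext fun ω => (Finset.sup'_apply hs f ω).symm

lemma measurableSet_persistSet (m : ℕ) : MeasurableSet (persistSet m) := by
  simp only [persistSet, Set.ofPred_forall]
  refine .iInter fun s => .iInter fun _ => measurableSet_le ?_ measurable_const
  unfold iterSum partialSum
  fun_prop

lemma dependsOn_mem_persistSet (m : ℕ) : DependsOn (· ∈ persistSet m) (Icc 1 m) := by
  intro x y hxy
  have hiter : ∀ s ∈ Icc 1 m, iterSum x s = iterSum y s := fun s hs =>
    sum_congr rfl fun j hj => sum_congr rfl fun i hi => hxy i (by
      simp only [mem_Icc, coe_Icc, Set.mem_Icc] at hs hj hi ⊢; omega)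
  simp only [persistSet, Set.mem_ofPred_eq, eq_iff_iff]
  exact forall₂_congr fun s hs => by rw [hiter s hs]

lemma measurable_indicator_persistSet_comp (m : ℕ) (κ : ℕ → ℕ) :
    Measurable fun x : ℕ → ℝ => (persistSet m).indicator (1 : (ℕ → ℝ) → ℝ) (x ∘ κ) :=
  (measurable_one.indicator (measurableSet_persistSet m)).comp (by fun_prop)

lemma dependsOn_indicator_persistSet_comp (m : ℕ) {κ : ℕ → ℕ} {T : Set ℕ}
    (hκ : Set.MapsTo κ (Icc 1 m) T) :
    DependsOn (fun x : ℕ → ℝ => (persistSet m).indicator (1 : (ℕ → ℝ) → ℝ) (x ∘ κ)) T :=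
  fun (x y : ℕ → ℝ) hxy => by
    have h : x ∘ κ ∈ persistSet m ↔ y ∘ κ ∈ persistSet m :=
      iff_of_eq ((dependsOn_mem_persistSet m).comp_right κ fun i hi => hxy i (hκ.image_subset hi))
    by_cases hx : x ∘ κ ∈ persistSet m <;> simp [Set.indicator, hx, h.mp, h.not.mp]

section Probability

variable {Ω : Type*} [MeasurableSpace Ω] {μ : Measure Ω}
  {X : ℕ → Ω → ℝ}

lemma integral_indicator_persistSet_comp (hX : iIndepFun X μ) (hmeas : ∀ i, Measurable (X i))
    {i₀ : ℕ} (hid : ∀ i, IdentDistrib (X i) (X i₀) μ μ) {m : ℕ} {κ : ℕ → ℕ}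
    (hκ : Set.InjOn κ (Icc 1 m)) :
    ∫ ω, (persistSet m).indicator (1 : (ℕ → ℝ) → ℝ) ((X · ω) ∘ κ) ∂μ
      = (μ {ω | (X · ω) ∈ persistSet m}).toReal := by
  have hmeasY : Measurable fun ω => (X · ω) ∘ κ := by fun_prop
  rw [← hX.measure_comp_mem_eq hmeas hid hκ (measurableSet_persistSet m)
    (dependsOn_mem_persistSet m), ← measureReal_def]
  exact integral_indicator_one ((measurableSet_persistSet m).preimage hmeasY)

lemma measurable_pivotWeight (k m : ℕ) : Measurable (pivotWeight k m) :=
  (measurable_indicator_persistSet_comp k _).mul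
    ((measurable_pi_apply (k + 2)).negPart.mul (measurable_indicator_persistSet_comp m _))

lemma integrable_pivotWeight (hmeas : ∀ i, Measurable (X i)) (k m : ℕ)
    (hint : Integrable (X (k + 2)) μ) : Integrable (fun ω => pivotWeight k m (X · ω)) μ :=
  hint.abs.mono' ((measurable_pivotWeight k m).comp (by fun_prop)).aestronglyMeasurable
    (.of_forall fun ω => abs_pivotWeight_le k m _)

theorem integral_pivotWeight (hX : iIndepFun X μ) (hmeas : ∀ i, Measurable (X i))
    {i₀ : ℕ} (hid : ∀ i, IdentDistrib (X i) (X i₀) μ μ) (k m : ℕ) :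
    ∫ ω, pivotWeight k m (X · ω) ∂μ = (μ {ω | (X · ω) ∈ persistSet k}).toReal *
      ((∫ ω, (X i₀ ω)⁻ ∂μ) * (μ {ω | (X · ω) ∈ persistSet m}).toReal) := by
  have hpast_law := integral_indicator_persistSet_comp hX hmeas hid (m := k) (κ := (k + 2 - ·))
    fun b hb b' hb' h => by simp only [coe_Icc, Set.mem_Icc] at hb hb' h; omega
  have hfuture_law := integral_indicator_persistSet_comp hX hmeas hid (m := m)
    (κ := (k + 2 + ·)) fun b _ b' _ h => by simpa using h
  have hpivot_law : ∫ ω, (X (k + 2) ω)⁻ ∂μ = ∫ ω, (X i₀ ω)⁻ ∂μ :=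
    ((hid (k + 2)).comp measurable_id.negPart).integral_eq
  rw [← hpast_law, ← hfuture_law, ← hpivot_law]
  refine hX.integral_mul_mul_of_dependsOn hmeas (s := Icc 2 (k + 1)) (t := {k + 2})
    (u := Icc (k + 3) (k + 2 + m)) ?_ ?_ ?_ (measurable_indicator_persistSet_comp k _)
    (measurable_pi_apply (k + 2)).negPart (measurable_indicator_persistSet_comp m _)
    (dependsOn_indicator_persistSet_comp k ?_) (fun x y h => congrArg (·⁻) (h (k + 2) (by simp)))
    (dependsOn_indicator_persistSet_comp m ?_) <;>
  first
  | exact disjoint_left.mpr fun i hi hi' => by simp only [mem_Icc, mem_singleton] at hi hi'; omega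
  | exact fun b hb => by simp only [coe_Icc, Set.mem_Icc] at hb ⊢; omega

theorem integral_sum_pivotWeight (hX : iIndepFun X μ) (hmeas : ∀ i, Measurable (X i))
    {i₀ : ℕ} (hid : ∀ i, IdentDistrib (X i) (X i₀) μ μ) (hint : Integrable (X i₀) μ) (n : ℕ) :
    ∫ ω, ∑ k ∈ range (n - 1), pivotWeight k (n - 2 - k) (X · ω) ∂μ
      = (∫ ω, (X i₀ ω)⁻ ∂μ) * ∑ k ∈ range (n - 1), (μ {ω | (X · ω) ∈ persistSet k}).toReal *
          (μ {ω | (X · ω) ∈ persistSet (n - 2 - k)}).toReal := by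
  rw [integral_finsetSum _ fun k _ =>
    integrable_pivotWeight hmeas _ _ ((hid _).integrable_iff.mpr hint), mul_sum]
  exact sum_congr rfl fun k _ => by rw [integral_pivotWeight hX hmeas hid]; ring

end Probability

/-- For i.i.d. mean-zero variables with `E|X_1| = 1`, and `p_k, q_k` the
strict/weak persistence probabilities of the iterated partial sums `S^{(2)}`, for `n > 2`
one has `∑_{k=0}^{n-2} p_k q_{n-2-k} ≤ 2 E[A_{n-1} - B_{n-1}]`, where
`A_m = max_{1≤k≤m}(-S_{k+1})` and `B_m = -max_{1≤k≤m} S_k`. -/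
theorem iterated_persistence_unhooking_upper
    {Ω : Type*} [MeasureSpace Ω] [IsProbabilityMeasure (ℙ : Measure Ω)]
    (n : ℕ) (hn : 2 < n)
    (X : ℕ → Ω → ℝ) (hmeas : ∀ i, Measurable (X i))
    (hindep : iIndepFun X ℙ)
    (hid : ∀ i, IdentDistrib (X i) (X 1) ℙ ℙ)
    (hint : Integrable (X 1) ℙ)
    (hmean : ∫ ω, X 1 ω = 0)
    (habs : ∫ ω, |X 1 ω| = 1)
    (S : ℕ → Ω → ℝ) (hS : ∀ k ω, S k ω = ∑ i ∈ Finset.Icc 1 k, X i ω)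
    (S2 : ℕ → Ω → ℝ) (hS2 : ∀ k ω, S2 k ω = ∑ j ∈ Finset.Icc 1 k, S j ω)
    (p q : ℕ → ℝ)
    (hp : ∀ k, p k = (ℙ {ω | ∀ j ∈ Finset.Icc 1 k, S2 j ω < 0}).toReal)
    (hq : ∀ k, q k = (ℙ {ω | ∀ j ∈ Finset.Icc 1 k, S2 j ω ≤ 0}).toReal)
    (hne : (Finset.Icc 1 (n - 1)).Nonempty)
    (A B : Ω → ℝ)
    (hA : ∀ ω, A ω = (Finset.Icc 1 (n - 1)).sup' hne (fun k => -S (k + 1) ω))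
    (hB : ∀ ω, B ω = -(Finset.Icc 1 (n - 1)).sup' hne (fun k => S k ω)) :
    ∑ k ∈ Finset.range (n - 1), p k * q (n - 2 - k) ≤ 2 * ∫ ω, (A ω - B ω) := by
  obtain rfl : S = fun k ω => partialSum (X · ω) k := funext₂ hS
  obtain rfl : S2 = fun k ω => iterSum (X · ω) k := funext₂ hS2
  have hq' : ∀ k, q k = (ℙ {ω | (X · ω) ∈ persistSet k}).toReal := hq
  have hpq : ∀ k, p k ≤ q k := fun k => by
    rw [hp, hq]
    exact ENNReal.toReal_mono (measure_ne_top _ _) (measure_mono fun ω hω j hj => (hω j hj).le)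
  have hSint : ∀ k, Integrable (fun ω => partialSum (X · ω) k) :=
    fun k => integrable_finsetSum _ fun i _ => (hid i).integrable_iff.mpr hint
  have hABint : Integrable (fun ω => A ω - B ω) := by
    simp only [hA, hB]
    exact (Integrable.finset_sup' hne fun k _ => (hSint (k + 1)).neg).sub
      (Integrable.finset_sup' hne fun k _ => hSint k).neg
  have hAB : ∀ ω, ∑ k ∈ range (n - 1), pivotWeight k (n - 2 - k) (X · ω) ≤ A ω - B ω :=
    fun ω => by rw [hA, hB]; exact sum_pivotWeight_le _ hn hne
  have hnegPart : ∫ ω, (X 1 ω)⁻ = 1 / 2 := by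
    linarith [integral_abs_eq_two_mul_integral_negPart_add_integral hint]
  calc ∑ k ∈ range (n - 1), p k * q (n - 2 - k)
      ≤ ∑ k ∈ range (n - 1), q k * q (n - 2 - k) :=
        sum_le_sum fun k _ => mul_le_mul_of_nonneg_right (hpq k) (by rw [hq']; positivity)
    _ = 2 * ∫ ω, ∑ k ∈ range (n - 1), pivotWeight k (n - 2 - k) (X · ω) := by
        rw [integral_sum_pivotWeight hindep hmeas hid hint, hnegPart]
        simp only [hq']
        ring
    _ ≤ 2 * ∫ ω, (A ω - B ω) := mul_le_mul_of_nonneg_left (integral_mono_of_nonneg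
        (.of_forall fun ω => sum_nonneg fun k _ => pivotWeight_nonneg _ _ _) hABint
        (.of_forall hAB)) zero_le_two
end

section
/- Let X_1,...,X_n be i.i.d. integrable random variables with mean zero and S_k = X_1+...+X_k. Then E[max_{1≤k≤n} S_k] ≤ 270 E|S_n|. -/
/-!
If `g` is centred and independent of `f`, then `E|f| ≤ E|f + g|` (test `f + g` against the sign
of `f`). Hence each tail sum `T_k = S_n - S_k` satisfies `E|T_k| ≤ E|S_n| =: a`, and by Markov
`P(T_k ≥ -t/2) ≥ 1/2` once `t > 4a`. Splitting `{max S_k > t}` according to the first `k` with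
`S_k > t`, an event independent of `T_k`, gives Ottaviani's inequality
`P(max S_k > t) ≤ 2 P(S_n > t/2)` for `t > 4a`. Integrating over `t` (layer cake) yields
`E[max S_k] ≤ 4a + 2 E[2|S_n|] = 8a`.
-/

open MeasureTheory ProbabilityTheory Finset
open scoped ENNReal

section Integral

variable {Ω : Type*} [MeasurableSpace Ω] {μ : Measure Ω}

lemma integral_le_toReal_lintegral_ofReal (f : Ω → ℝ) :
    ∫ ω, f ω ∂μ ≤ (∫⁻ ω, ENNReal.ofReal (f ω) ∂μ).toReal := by
  by_cases hf : Integrable f μ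
  · rw [integral_eq_lintegral_pos_part_sub_lintegral_neg_part hf]
    exact sub_le_self _ ENNReal.toReal_nonneg
  · rw [integral_undef hf]
    exact ENNReal.toReal_nonneg

lemma integral_abs_le_integral_abs_add {f g : Ω → ℝ}
    (hf : Integrable f μ) (hg : Integrable g μ) (hfg : IndepFun f g μ) (hg0 : ∫ ω, g ω ∂μ = 0) :
    ∫ ω, |f ω| ∂μ ≤ ∫ ω, |f ω + g ω| ∂μ := by
  set sgn : ℝ → ℝ := fun x => if 0 ≤ x then 1 else -1
  have hsgn : Measurable sgn := Measurable.ite measurableSet_Ici measurable_const measurable_const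
  have hsgn_abs : ∀ x, |sgn x| ≤ 1 := fun x => by unfold sgn; split_ifs <;> simp
  have hsgn_mul : ∀ x, x * sgn x = |x| := fun x => by
    unfold sgn; split_ifs with h
    · simp [abs_of_nonneg h]
    · simp [abs_of_neg (not_le.mp h)]
  have hsf : AEStronglyMeasurable (fun ω => sgn (f ω)) μ :=
    (hsgn.comp_aemeasurable hf.aemeasurable).aestronglyMeasurable
  have hbdd : ∀ᵐ ω ∂μ, ‖sgn (f ω)‖ ≤ 1 := ae_of_all _ fun ω => hsgn_abs _
  have hcross : ∫ ω, g ω * sgn (f ω) ∂μ = 0 := by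
    have := (hfg.symm.comp measurable_id hsgn).integral_mul_eq_mul_integral
      hg.aestronglyMeasurable hsf
    simpa [hg0] using this
  calc ∫ ω, |f ω| ∂μ = ∫ ω, (f ω + g ω) * sgn (f ω) ∂μ := by
        simp_rw [add_mul, hsgn_mul]
        rw [integral_add hf.abs (hg.mul_bdd hsf hbdd), hcross, add_zero]
    _ ≤ ∫ ω, |f ω + g ω| ∂μ :=
        integral_mono ((hf.add hg).mul_bdd hsf hbdd) (hf.add hg).abs fun ω =>
          (le_abs_self _).trans <| by
            rw [abs_mul]; exact mul_le_of_le_one_right (abs_nonneg _) (hsgn_abs _)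

lemma lintegral_ofReal_eq_lintegral_meas_lt {f : Ω → ℝ} (hf : AEMeasurable f μ) :
    ∫⁻ ω, ENNReal.ofReal (f ω) ∂μ = ∫⁻ t in Set.Ioi 0, μ {ω | t < f ω} := by
  have hpos : ∀ ω, ENNReal.ofReal (f ω) = ENNReal.ofReal (max (f ω) 0) := fun ω => by
    rcases le_total (f ω) 0 with h | h
    · simp [h, ENNReal.ofReal_of_nonpos]
    · simp [h]
  simp_rw [hpos]
  rw [lintegral_eq_lintegral_meas_lt (f := fun ω => max (f ω) 0) μ
    (ae_of_all _ fun ω => le_max_right _ _) (hf.max aemeasurable_const)]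
  refine setLIntegral_congr_fun measurableSet_Ioi fun t (ht : 0 < t) => ?_
  simp only [lt_max_iff, ht.not_gt, or_false]

lemma lintegral_ofReal_le_of_meas_lt_le [IsProbabilityMeasure μ] {f g : Ω → ℝ}
    (hf : AEMeasurable f μ) (hg : AEMeasurable g μ) {c : ℝ} (hc : 0 ≤ c) {K : ℝ≥0∞}
    (h : ∀ t, c < t → μ {ω | t < f ω} ≤ K * μ {ω | t < g ω}) :
    ∫⁻ ω, ENNReal.ofReal (f ω) ∂μ ≤ ENNReal.ofReal c + K * ∫⁻ ω, ENNReal.ofReal (g ω) ∂μ := by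
  have hanti : Antitone fun t => μ {ω | t < g ω} :=
    fun s t hst => measure_mono fun ω (hω : t < g ω) => hst.trans_lt hω
  rw [lintegral_ofReal_eq_lintegral_meas_lt hf, lintegral_ofReal_eq_lintegral_meas_lt hg]
  conv_lhs => rw [← Set.Ioc_union_Ioi_eq_Ioi hc,
    lintegral_union measurableSet_Ioi (Set.Ioc_disjoint_Ioi le_rfl)]
  gcongr
  · calc ∫⁻ t in Set.Ioc 0 c, μ {ω | t < f ω}
        ≤ ∫⁻ _ in Set.Ioc 0 c, 1 := lintegral_mono fun _ => prob_le_one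
      _ = ENNReal.ofReal c := by simp
  · calc ∫⁻ t in Set.Ioi c, μ {ω | t < f ω}
        ≤ ∫⁻ t in Set.Ioi c, K * μ {ω | t < g ω} :=
          setLIntegral_mono (hanti.measurable.const_mul K) h
      _ ≤ ∫⁻ t in Set.Ioi 0, K * μ {ω | t < g ω} := lintegral_mono_set (Set.Ioi_subset_Ioi hc)
      _ = K * ∫⁻ t in Set.Ioi 0, μ {ω | t < g ω} := lintegral_const_mul K hanti.measurable

lemma half_le_measure_neg_le [IsProbabilityMeasure μ] {f : Ω → ℝ} (hf : Integrable f μ)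
    {s : ℝ} (hs : 0 < s) (h : 2 * ∫ ω, |f ω| ∂μ ≤ s) :
    2⁻¹ ≤ μ {ω | -s ≤ f ω} := by
  have hmarkov : s * μ.real {ω | s ≤ |f ω|} ≤ ∫ ω, |f ω| ∂μ :=
    mul_meas_ge_le_integral_of_nonneg (ae_of_all _ fun ω => abs_nonneg _) hf.abs s
  have htail : μ {ω | f ω < -s} ≤ 2⁻¹ := by
    have hsub : {ω | f ω < -s} ⊆ {ω | s ≤ |f ω|} := fun ω (hω : f ω < -s) =>
      (lt_neg.mp hω).le.trans (neg_le_abs _)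
    calc μ {ω | f ω < -s} ≤ μ {ω | s ≤ |f ω|} := measure_mono hsub
      _ = ENNReal.ofReal (μ.real {ω | s ≤ |f ω|}) :=
          (ofReal_measureReal (measure_ne_top _ _)).symm
      _ ≤ ENNReal.ofReal 2⁻¹ := ENNReal.ofReal_le_ofReal (by nlinarith)
      _ = 2⁻¹ := by simp
  have hcover : μ Set.univ ≤ μ {ω | -s ≤ f ω} + μ {ω | f ω < -s} :=
    (measure_mono fun ω _ => le_or_gt (-s) (f ω)).trans (measure_union_le _ _)
  rw [measure_univ] at hcover
  rw [← ENNReal.one_sub_inv_two, tsub_le_iff_right]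
  exact hcover.trans (by gcongr)

end Integral

section Independence

lemma measurable_sum_iSup_comap {Ω ι : Type*} {X : ι → Ω → ℝ} {s t : Finset ι} (hts : t ⊆ s) :
    Measurable[⨆ i ∈ s, MeasurableSpace.comap (X i) inferInstance] fun ω => ∑ i ∈ t, X i ω :=
  Finset.measurable_sum t fun i hi =>
    (comap_measurable (X i)).mono (le_iSup₂_of_le i (hts hi) le_rfl) le_rfl

variable {Ω ι : Type*} [MeasurableSpace Ω] {μ : Measure Ω} {X : ι → Ω → ℝ}

lemma ProbabilityTheory.iIndepFun.indep_iSup_comap (hX : iIndepFun X μ)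
    (hmeas : ∀ i, Measurable (X i)) {s t : Finset ι} (hst : Disjoint s t) :
    Indep (⨆ i ∈ s, MeasurableSpace.comap (X i) inferInstance)
      (⨆ i ∈ t, MeasurableSpace.comap (X i) inferInstance) μ :=
  indep_iSup_of_disjoint (fun i => (hmeas i).comap_le) ((iIndepFun_iff_iIndep _ _ _).mp hX)
    (Finset.disjoint_coe.mpr hst)

lemma ProbabilityTheory.iIndepFun.indepFun_sum_sum (hX : iIndepFun X μ)
    (hmeas : ∀ i, Measurable (X i)) {s t : Finset ι} (hst : Disjoint s t) :
    IndepFun (fun ω => ∑ i ∈ s, X i ω) (fun ω => ∑ i ∈ t, X i ω) μ := by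
  rw [IndepFun_iff_Indep]
  exact indep_of_indep_of_le_right
    (indep_of_indep_of_le_left (hX.indep_iSup_comap hmeas hst)
      (measurable_sum_iSup_comap subset_rfl).comap_le)
    (measurable_sum_iSup_comap subset_rfl).comap_le

end Independence

lemma sum_Icc_one_add_sum_Ioc {M : Type*} [AddCommMonoid M] (f : ℕ → M) {k n : ℕ}
    (hkn : k ≤ n) :
    ∑ i ∈ Icc 1 k, f i + ∑ i ∈ Ioc k n, f i = ∑ i ∈ Icc 1 n, f i := by
  have hIcc : ∀ m, Icc 1 m = Ioc 0 m := Icc_add_one_left_eq_Ioc 0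
  rw [hIcc, hIcc, sum_Ioc_consecutive f k.zero_le hkn]

lemma disjoint_Icc_Ioc {a k n : ℕ} : Disjoint (Icc a k) (Ioc k n) :=
  (Iic_disjoint_Ioc le_rfl).mono_left Icc_subset_Iic_self

section FirstExceedance

variable {Ω : Type*} (f : ℕ → Ω → ℝ) (t : ℝ)

def firstExceedance (k : ℕ) : Set Ω := {ω | t < f k ω} ∩ ⋂ j ∈ Ico 1 k, {ω | f j ω ≤ t}

lemma setOf_lt_sup'_subset_iUnion_firstExceedance {n : ℕ} (hne : (Icc 1 n).Nonempty) :
    {ω | t < (Icc 1 n).sup' hne (f · ω)} ⊆ ⋃ k ∈ Icc 1 n, firstExceedance f t k := by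
  intro ω (hω : t < _)
  obtain ⟨k, hk, hkt⟩ := (Finset.lt_sup'_iff _).mp hω
  classical
  have hP : ∃ m, 1 ≤ m ∧ t < f m ω := ⟨k, (mem_Icc.mp hk).1, hkt⟩
  have hle : Nat.find hP ≤ k := Nat.find_min' hP ⟨(mem_Icc.mp hk).1, hkt⟩
  simp only [Set.mem_iUnion, firstExceedance, Set.mem_inter_iff, Set.mem_iInter,
    Set.mem_ofPred_eq]
  refine ⟨Nat.find hP, mem_Icc.mpr ⟨(Nat.find_spec hP).1, hle.trans (mem_Icc.mp hk).2⟩,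
    (Nat.find_spec hP).2, fun j hj => ?_⟩
  obtain ⟨hj1, hjk⟩ := mem_Ico.mp hj
  exact not_lt.mp fun h => Nat.find_min hP hjk ⟨hj1, h⟩

lemma pairwiseDisjoint_firstExceedance : (Set.Ici 1).PairwiseDisjoint (firstExceedance f t) := by
  suffices ∀ k l, 1 ≤ k → k < l → Disjoint (firstExceedance f t k) (firstExceedance f t l) by
    intro k hk l hl hkl
    rcases hkl.lt_or_gt with h | h
    exacts [this k l hk h, (this l k hl h).symm]
  intro k l hk hkl
  refine Set.disjoint_left.mpr fun ω hωk hωl => ?_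
  simp only [firstExceedance, Set.mem_inter_iff, Set.mem_iInter, Set.mem_ofPred_eq] at hωk hωl
  exact (hωl.2 k (mem_Ico.mpr ⟨hk, hkl⟩)).not_gt hωk.1

lemma measurableSet_firstExceedance {m : MeasurableSpace Ω} {k : ℕ}
    (hf : ∀ j ≤ k, Measurable[m] (f j)) : MeasurableSet[m] (firstExceedance f t k) :=
  (measurableSet_lt measurable_const (hf k le_rfl)).inter <|
    .biInter (Ico 1 k).countable_toSet fun j hj =>
      measurableSet_le (hf j (mem_Ico.mp hj).2.le) measurable_const

end FirstExceedance

section Maximal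

variable {Ω : Type*} [MeasurableSpace Ω] {μ : Measure Ω} {X : ℕ → Ω → ℝ}

theorem mul_measure_lt_sup'_sum_le (hX : iIndepFun X μ) (hmeas : ∀ i, Measurable (X i))
    {n : ℕ} (hne : (Icc 1 n).Nonempty) {c : ℝ≥0∞} {s t : ℝ}
    (hc : ∀ k ∈ Icc 1 n, c ≤ μ {ω | -s ≤ ∑ i ∈ Ioc k n, X i ω}) :
    c * μ {ω | t < (Icc 1 n).sup' hne fun k => ∑ i ∈ Icc 1 k, X i ω} ≤
      μ {ω | t - s < ∑ i ∈ Icc 1 n, X i ω} := by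
  set S : ℕ → Ω → ℝ := fun k ω => ∑ i ∈ Icc 1 k, X i ω
  set A := firstExceedance S t
  set C : ℕ → Set Ω := fun k => {ω | -s ≤ ∑ i ∈ Ioc k n, X i ω}
  have hle : ∀ r : Finset ℕ, ⨆ i ∈ r, MeasurableSpace.comap (X i) inferInstance ≤ ‹_› :=
    fun r => iSup₂_le fun i _ => (hmeas i).comap_le
  have hA :
      ∀ k, MeasurableSet[⨆ i ∈ Icc 1 k, MeasurableSpace.comap (X i) inferInstance] (A k) :=
    fun k => measurableSet_firstExceedance S t fun j hj =>
      measurable_sum_iSup_comap (Icc_subset_Icc_right hj)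
  have hC :
      ∀ k, MeasurableSet[⨆ i ∈ Ioc k n, MeasurableSpace.comap (X i) inferInstance] (C k) :=
    fun k => measurableSet_le measurable_const (measurable_sum_iSup_comap subset_rfl)
  have hdisj : (↑(Icc 1 n) : Set ℕ).PairwiseDisjoint fun k => A k ∩ C k :=
    ((pairwiseDisjoint_firstExceedance S t).subset fun k hk => (mem_Icc.mp hk).1).mono
      fun k => Set.inter_subset_left
  -- on `A k ∩ C k` the walk has exceeded `t` at time `k` and lost at most `s` afterwards
  have hsub : (⋃ k ∈ Icc 1 n, A k ∩ C k) ⊆ {ω | t - s < S n ω} := by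
    simp only [Set.iUnion_subset_iff]
    rintro k hk ω ⟨⟨hωA : t < ∑ i ∈ Icc 1 k, X i ω, -⟩, hωC : -s ≤ ∑ i ∈ Ioc k n, X i ω⟩
    have hsplit := sum_Icc_one_add_sum_Ioc (X · ω) (mem_Icc.mp hk).2
    show t - s < ∑ i ∈ Icc 1 n, X i ω
    linarith
  calc c * μ {ω | t < (Icc 1 n).sup' hne fun k => S k ω}
      ≤ c * ∑ k ∈ Icc 1 n, μ (A k) := by
        gcongr
        exact (measure_mono (setOf_lt_sup'_subset_iUnion_firstExceedance S t hne)).trans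
          (measure_biUnion_finset_le _ _)
    _ = ∑ k ∈ Icc 1 n, μ (A k) * c := by rw [mul_sum]; simp_rw [mul_comm c]
    _ ≤ ∑ k ∈ Icc 1 n, μ (A k ∩ C k) := by
        gcongr with k hk
        rw [(Indep_iff _ _ μ).mp (hX.indep_iSup_comap hmeas disjoint_Icc_Ioc) _ _
          (hA k) (hC k)]
        exact mul_le_mul_right (hc k hk) _
    _ = μ (⋃ k ∈ Icc 1 n, A k ∩ C k) :=
        (measure_biUnion_finset hdisj fun k _ =>
          (hle _ _ (hA k)).inter (hle _ _ (hC k))).symm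
    _ ≤ μ {ω | t - s < S n ω} := measure_mono hsub

end Maximal

section Centred

variable {Ω : Type*} [MeasurableSpace Ω] {μ : Measure Ω} {X : ℕ → Ω → ℝ}

lemma integral_abs_sum_Ioc_le (hX : iIndepFun X μ) (hmeas : ∀ i, Measurable (X i))
    (hint : ∀ i, Integrable (X i) μ) (hmean : ∀ i, ∫ ω, X i ω ∂μ = 0) {k n : ℕ} (hkn : k ≤ n) :
    ∫ ω, |∑ i ∈ Ioc k n, X i ω| ∂μ ≤ ∫ ω, |∑ i ∈ Icc 1 n, X i ω| ∂μ := by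
  calc ∫ ω, |∑ i ∈ Ioc k n, X i ω| ∂μ
      ≤ ∫ ω, |∑ i ∈ Ioc k n, X i ω + ∑ i ∈ Icc 1 k, X i ω| ∂μ :=
        integral_abs_le_integral_abs_add (integrable_finsetSum _ fun i _ => hint i)
          (integrable_finsetSum _ fun i _ => hint i)
          (hX.indepFun_sum_sum hmeas disjoint_Icc_Ioc.symm)
          (by rw [integral_finsetSum _ fun i _ => hint i]; simp [hmean])
    _ = ∫ ω, |∑ i ∈ Icc 1 n, X i ω| ∂μ := by
        simp_rw [add_comm (∑ i ∈ Ioc k n, _), sum_Icc_one_add_sum_Ioc _ hkn]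

theorem measure_lt_sup'_sum_le_two_mul [IsProbabilityMeasure μ] (hX : iIndepFun X μ)
    (hmeas : ∀ i, Measurable (X i)) (hint : ∀ i, Integrable (X i) μ)
    (hmean : ∀ i, ∫ ω, X i ω ∂μ = 0)
    {n : ℕ} (hne : (Icc 1 n).Nonempty) {t : ℝ} (ht : 4 * ∫ ω, |∑ i ∈ Icc 1 n, X i ω| ∂μ < t) :
    μ {ω | t < (Icc 1 n).sup' hne fun k => ∑ i ∈ Icc 1 k, X i ω} ≤
      2 * μ {ω | t < 2 * |∑ i ∈ Icc 1 n, X i ω|} := by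
  have ha : 0 ≤ ∫ ω, |∑ i ∈ Icc 1 n, X i ω| ∂μ := integral_nonneg fun _ => abs_nonneg _
  -- Markov, as `E|T_k| ≤ E|S_n| < t/4` for the tail sums `T_k`
  have hc : ∀ k ∈ Icc 1 n, 2⁻¹ ≤ μ {ω | -(t / 2) ≤ ∑ i ∈ Ioc k n, X i ω} := fun k hk =>
    half_le_measure_neg_le (integrable_finsetSum _ fun i _ => hint i) (by linarith) (by
      linarith [integral_abs_sum_Ioc_le hX hmeas hint hmean (mem_Icc.mp hk).2])
  have hsub : {ω | t - t / 2 < ∑ i ∈ Icc 1 n, X i ω} ⊆ {ω | t < 2 * |∑ i ∈ Icc 1 n, X i ω|} :=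
    fun ω (hω : t - t / 2 < _) => show t < _ by linarith [le_abs_self (∑ i ∈ Icc 1 n, X i ω)]
  calc μ {ω | t < (Icc 1 n).sup' hne fun k => ∑ i ∈ Icc 1 k, X i ω}
      = 2 * (2⁻¹ * μ {ω | t < (Icc 1 n).sup' hne fun k => ∑ i ∈ Icc 1 k, X i ω}) := by
        rw [← mul_assoc, ENNReal.mul_inv_cancel two_ne_zero ENNReal.ofNat_ne_top, one_mul]
    _ ≤ 2 * μ {ω | t < 2 * |∑ i ∈ Icc 1 n, X i ω|} := by
        grw [mul_measure_lt_sup'_sum_le hX hmeas hne hc, measure_mono hsub]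

theorem integral_sup'_sum_le [IsProbabilityMeasure μ] (hX : iIndepFun X μ)
    (hmeas : ∀ i, Measurable (X i)) (hint : ∀ i, Integrable (X i) μ)
    (hmean : ∀ i, ∫ ω, X i ω ∂μ = 0)
    {n : ℕ} (hne : (Icc 1 n).Nonempty) :
    ∫ ω, (Icc 1 n).sup' hne (fun k => ∑ i ∈ Icc 1 k, X i ω) ∂μ ≤
      8 * ∫ ω, |∑ i ∈ Icc 1 n, X i ω| ∂μ := by
  set a := ∫ ω, |∑ i ∈ Icc 1 n, X i ω| ∂μ
  have ha : 0 ≤ a := integral_nonneg fun _ => abs_nonneg _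
  have hsum : ∀ k, Measurable fun ω => ∑ i ∈ Icc 1 k, X i ω :=
    fun k => Finset.measurable_sum _ fun i _ => hmeas i
  have hsup : Measurable fun ω => (Icc 1 n).sup' hne fun k => ∑ i ∈ Icc 1 k, X i ω := by
    convert Finset.measurable_sup' hne fun k _ => hsum k using 1
    ext ω
    exact (Finset.sup'_apply hne (fun k ω => ∑ i ∈ Icc 1 k, X i ω) ω).symm
  have hlayer := lintegral_ofReal_le_of_meas_lt_le hsup.aemeasurable
    ((hsum n).abs.const_mul 2).aemeasurable (by positivity : 0 ≤ 4 * a)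
    fun t ht => measure_lt_sup'_sum_le_two_mul hX hmeas hint hmean hne ht
  have htwo :
      ∫⁻ ω, ENNReal.ofReal (2 * |∑ i ∈ Icc 1 n, X i ω|) ∂μ = ENNReal.ofReal (2 * a) := by
    rw [← ofReal_integral_eq_lintegral_ofReal
      ((integrable_finsetSum _ fun i _ => hint i).abs.const_mul 2)
      (ae_of_all _ fun _ => by positivity), integral_const_mul]
  calc ∫ ω, (Icc 1 n).sup' hne (fun k => ∑ i ∈ Icc 1 k, X i ω) ∂μ
      ≤ (∫⁻ ω, ENNReal.ofReal ((Icc 1 n).sup' hne fun k => ∑ i ∈ Icc 1 k, X i ω) ∂μ).toReal :=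
        integral_le_toReal_lintegral_ofReal _
    _ ≤ 8 * a := by
        refine ENNReal.toReal_le_of_le_ofReal (by positivity) (hlayer.trans_eq ?_)
        rw [htwo, ← ENNReal.ofReal_ofNat 2, ← ENNReal.ofReal_mul zero_le_two,
          ← ENNReal.ofReal_add (by positivity) (by positivity)]
        ring_nf

end Centred

theorem expectation_max_le_montgomery_smith_general
    {Ω : Type*} [MeasureSpace Ω] [IsProbabilityMeasure (ℙ : Measure Ω)]
    (n : ℕ)
    (X : ℕ → Ω → ℝ) (hmeas : ∀ i, Measurable (X i))
    (hindep : iIndepFun X ℙ)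
    (hid : ∀ i, IdentDistrib (X i) (X 1) ℙ ℙ)
    (hint : Integrable (X 1) ℙ)
    (hmean : ∫ ω, X 1 ω = 0)
    (S : ℕ → Ω → ℝ) (hS : ∀ k ω, S k ω = ∑ i ∈ Finset.Icc 1 k, X i ω)
    (hne : (Finset.Icc 1 n).Nonempty) :
    (∫ ω, (Finset.Icc 1 n).sup' hne (fun k => S k ω)) ≤ 270 * ∫ ω, |S n ω| := by
  obtain rfl : S = fun k ω => ∑ i ∈ Icc 1 k, X i ω := funext fun k => funext (hS k)
  have h8 := integral_sup'_sum_le hindep hmeas (fun i => (hid i).integrable_iff.mpr hint)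
    (fun i => (hid i).integral_eq.trans hmean) hne
  have ha : 0 ≤ ∫ ω, |∑ i ∈ Icc 1 n, X i ω| := integral_nonneg fun _ => abs_nonneg _
  linarith

/-- For i.i.d. integrable mean-zero variables,
`E[max_{1≤k≤n} S_k] ≤ 270 E|S_n|` (via the Montgomery-Smith maximal inequality). -/
theorem expectation_max_le_montgomery_smith
    {Ω : Type*} [MeasureSpace Ω] [IsProbabilityMeasure (ℙ : Measure Ω)]
    (n : ℕ) (hn : 1 ≤ n)
    (X : ℕ → Ω → ℝ) (hmeas : ∀ i, Measurable (X i))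
    (hindep : iIndepFun X ℙ)
    (hid : ∀ i, IdentDistrib (X i) (X 1) ℙ ℙ)
    (hint : Integrable (X 1) ℙ)
    (hmean : ∫ ω, X 1 ω = 0)
    (S : ℕ → Ω → ℝ) (hS : ∀ k ω, S k ω = ∑ i ∈ Finset.Icc 1 k, X i ω)
    (hne : (Finset.Icc 1 n).Nonempty) :
    (∫ ω, (Finset.Icc 1 n).sup' hne (fun k => S k ω)) ≤ 270 * ∫ ω, |S n ω| :=
  expectation_max_le_montgomery_smith_general n X hmeas hindep hid hint hmean S hS hne
end

section
/- Suppose a random variable X satisfies: there exists β > 0 and r > 0 with P(-X > r) > e^{-β r}, where β = -limsup_{t→∞} (1/t) log P(-X > t) (possibly β = ∞). Then there exist θ > 1/r and finite L such that for all t, s > 0: P(-X > t+s) ≤ L [P(-X > r)]^{θ(t+s)}. -/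
open MeasureTheory ProbabilityTheory Filter

/-- If `β = -limsup_{t→∞} (1/t) log P(-X > t)` (possibly `∞`) is positive
and `P(-X > r) > e^{-β r}` for some `r > 0`, then there exist `θ > 1/r` and finite `L`
such that `P(-X > t+s) ≤ L [P(-X > r)]^{θ(t+s)}` for all `t, s > 0`. -/
theorem decay_assumption_from_supexponential_tail
    {Ω : Type*} [MeasureSpace Ω] [IsProbabilityMeasure (ℙ : Measure Ω)]
    (X : Ω → ℝ) (hX : Measurable X)
    (β : EReal)
    (hβdef : β = -Filter.limsup
        (fun t : ℝ => ((t⁻¹ : ℝ) : EReal) * ENNReal.log (ℙ {ω | t < -X ω}))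
        Filter.atTop)
    (hβpos : 0 < β)
    (r : ℝ) (hr : 0 < r)
    (hcond : -β * (r : EReal) < ENNReal.log (ℙ {ω | r < -X ω})) :
    ∃ θ L : ℝ, 1 / r < θ ∧
      ∀ t > (0 : ℝ), ∀ s > (0 : ℝ),
        (ℙ {ω | t + s < -X ω}).toReal
          ≤ L * ((ℙ {ω | r < -X ω}).toReal) ^ (θ * (t + s)) := by
  set p : ENNReal := ℙ {ω | r < -X ω} with hp
  have hp1 : p ≤ 1 := prob_le_one
  have hpt : p ≠ ⊤ := (hp1.trans_lt ENNReal.one_lt_top).ne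
  have hp0 : p ≠ 0 := by
    intro h
    rw [h, ENNReal.log_zero] at hcond
    exact not_lt_bot hcond
  have hptr0 : 0 < p.toReal := ENNReal.toReal_pos hp0 hpt
  have hptr1 : p.toReal ≤ 1 := by
    have := ENNReal.toReal_mono ENNReal.one_ne_top hp1
    simpa using this
  by_cases hone : p.toReal = 1
  · refine ⟨1 / r + 1, 1, by linarith, ?_⟩
    intro t ht s hs
    rw [hone, Real.one_rpow, one_mul]
    have := ENNReal.toReal_mono ENNReal.one_ne_top
      (prob_le_one (μ := (ℙ : Measure Ω)) (s := {ω | t + s < -X ω}))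
    simpa using this
  · have hptr1' : p.toReal < 1 := lt_of_le_of_ne hptr1 hone
    set c : ℝ := -Real.log p.toReal with hc
    have hc0 : 0 < c := by
      have := Real.log_neg hptr0 hptr1'
      simp only [hc]; linarith
    have hlogp : ENNReal.log p = ((-c : ℝ) : EReal) := by
      rw [ENNReal.log_pos_real' hptr0, hc, neg_neg]
    have hβbot : β ≠ ⊥ := fun h => by simp [h] at hβpos
    have hcr : ((c / r : ℝ) : EReal) < β := by
      rcases eq_or_ne β ⊤ with h | h
      · rw [h]; exact EReal.coe_lt_top _
      · lift β to ℝ using ⟨h, hβbot⟩ with b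
        rw [hlogp, ← EReal.coe_neg, ← EReal.coe_mul] at hcond
        have hbc : -b * r < -c := by exact_mod_cast hcond
        have : c / r < b := by rw [div_lt_iff₀ hr]; nlinarith
        exact_mod_cast this
    obtain ⟨z, hz1, hz2⟩ := EReal.exists_between_coe_real hcr
    have hzr : c / r < z := by exact_mod_cast hz1
    set θ : ℝ := z / c with hθdef
    have hθ : 1 / r < θ := by
      have h1 : 1 / r * c = c / r := by ring
      rw [hθdef, lt_div_iff₀ hc0, h1]
      exact hzr
    have hθ0 : 0 < θ := lt_trans (by positivity) hθ
    have hzc : θ * c = z := div_mul_cancel₀ z hc0.ne'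
    -- limsup bound
    have hlt : Filter.limsup
        (fun t : ℝ => ((t⁻¹ : ℝ) : EReal) * ENNReal.log (ℙ {ω | t < -X ω}))
        Filter.atTop < ((-z : ℝ) : EReal) := by
      have h1 : -β < -((z : ℝ) : EReal) := EReal.neg_lt_neg_iff.mpr hz2
      have h2 : Filter.limsup
          (fun t : ℝ => ((t⁻¹ : ℝ) : EReal) * ENNReal.log (ℙ {ω | t < -X ω}))
          Filter.atTop = -β := by rw [hβdef, neg_neg]
      rw [h2, EReal.coe_neg]
      exact h1
    have hev := Filter.eventually_lt_of_limsup_lt hlt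
    obtain ⟨T0, hT0⟩ := Filter.eventually_atTop.mp hev
    set T : ℝ := max T0 1 with hT
    have hT1 : (1 : ℝ) ≤ T := le_max_right _ _
    have key : ∀ u : ℝ, T ≤ u →
        (ℙ {ω | u < -X ω}).toReal ≤ p.toReal ^ (θ * u) := by
      intro u hu
      have hu0 : (0 : ℝ) < u := lt_of_lt_of_le one_pos (hT1.trans hu)
      have hF := hT0 u (le_trans (le_max_left _ _) hu)
      set q : ENNReal := ℙ {ω | u < -X ω} with hq
      rcases eq_or_ne q 0 with h0 | h0
      · rw [h0]
        simpa using Real.rpow_nonneg hptr0.le (θ * u)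
      · have hqt : q ≠ ⊤ := ((prob_le_one (μ := (ℙ : Measure Ω))).trans_lt
          ENNReal.one_lt_top).ne
        have hq0 : 0 < q.toReal := ENNReal.toReal_pos h0 hqt
        rw [ENNReal.log_pos_real' hq0, ← EReal.coe_mul] at hF
        have hF' : u⁻¹ * Real.log q.toReal < -z := by exact_mod_cast hF
        have hlog : Real.log q.toReal < -z * u := by
          have h3 := (mul_lt_mul_iff_right₀ hu0).mpr hF'
          rw [← mul_assoc, mul_inv_cancel₀ hu0.ne', one_mul] at h3
          nlinarith
        have hexp : q.toReal < Real.exp (-z * u) := by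
          rw [← Real.exp_log hq0]
          exact Real.exp_lt_exp.mpr hlog
        have hrpow : p.toReal ^ (θ * u) = Real.exp (-z * u) := by
          rw [Real.rpow_def_of_pos hptr0]
          congr 1
          have hlp : Real.log p.toReal = -c := by rw [hc, neg_neg]
          rw [hlp, hθdef]
          field_simp
        linarith
    refine ⟨θ, p.toReal ^ (-(θ * T)), hθ, ?_⟩
    intro t ht s hs
    have hu0 : (0 : ℝ) < t + s := add_pos ht hs
    have hL1 : 1 ≤ p.toReal ^ (-(θ * T)) :=
      Real.one_le_rpow_of_pos_of_le_one_of_nonpos hptr0 hptr1 (by nlinarith)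
    rcases le_or_gt T (t + s) with h | h
    · calc (ℙ {ω | t + s < -X ω}).toReal ≤ p.toReal ^ (θ * (t + s)) := key _ h
        _ ≤ p.toReal ^ (-(θ * T)) * p.toReal ^ (θ * (t + s)) :=
          le_mul_of_one_le_left (Real.rpow_nonneg hptr0.le _) hL1
    · have h1 : (ℙ {ω | t + s < -X ω}).toReal ≤ 1 := by
        have := ENNReal.toReal_mono ENNReal.one_ne_top
          (prob_le_one (μ := (ℙ : Measure Ω)) (s := {ω | t + s < -X ω}))
        simpa using this
      have h2 : (1 : ℝ) ≤ p.toReal ^ (-(θ * T)) * p.toReal ^ (θ * (t + s)) := by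
        rw [← Real.rpow_add hptr0]
        exact Real.one_le_rpow_of_pos_of_le_one_of_nonpos hptr0 hptr1 (by nlinarith)
      linarith
end

section
/- Let X_1, ..., X_n be exchangeable random variables and fix 2 ≤ k ≤ n. Define Y_{k,2} = max{X_k/2, (2X_k+X_{k-1})/3, ..., ((k-1)X_k+...+X_2)/k}. Then P(Y_{k,2} < 0) = P(X_1 < 0, 2X_1+X_2 < 0, ..., (k-1)X_1 + ... + X_{k-1} < 0) = P(max_{1≤j≤k-1} S_j^{(2)} < 0), where S_j^{(2)} = ∑_{i=1}^j (j-i+1) X_i. -/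
open MeasureTheory ProbabilityTheory Finset

/-- For exchangeable `X_1,...,X_n` and `2 ≤ k ≤ n`, with
`Y_{k,2} = max{X_k/2, (2X_k+X_{k-1})/3, ..., ((k-1)X_k+⋯+X_2)/k}`, one has
`P(Y_{k,2} < 0) = P(X_1<0, 2X_1+X_2<0, ..., (k-1)X_1+⋯+X_{k-1}<0)
               = P(max_{1≤j≤k-1} S_j^{(2)} < 0)`,
where `S_j^{(2)} = ∑_{i=1}^j (j-i+1) X_i`. -/
theorem exchangeable_reversal_persistence
    {Ω : Type*} [MeasureSpace Ω] [IsProbabilityMeasure (ℙ : Measure Ω)]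
    (n : ℕ) (X : ℕ → Ω → ℝ) (hmeas : ∀ i, Measurable (X i))
    (hexch : ∀ σ : Equiv.Perm ℕ, (∀ i, n < i → σ i = i) →
      Measure.map (fun ω => fun i => X (σ i) ω) ℙ
        = Measure.map (fun ω => fun i => X i ω) ℙ)
    (k : ℕ) (hk2 : 2 ≤ k) (hkn : k ≤ n)
    (hne : (Finset.Icc 1 (k - 1)).Nonempty)
    (Y : Ω → ℝ)
    (hY : ∀ ω, Y ω = (Finset.Icc 1 (k - 1)).sup'
        hne (fun m => (∑ i ∈ Finset.Icc 1 m, (i : ℝ) * X (k - m + i) ω) / (m + 1)))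
    (S2 : ℕ → Ω → ℝ)
    (hS2 : ∀ j ω, S2 j ω = ∑ i ∈ Finset.Icc 1 j, ((j - i + 1 : ℕ) : ℝ) * X i ω) :
    ℙ {ω | Y ω < 0}
        = ℙ {ω | ∀ m ∈ Finset.Icc 1 (k - 1),
            (∑ i ∈ Finset.Icc 1 m, ((m - i + 1 : ℕ) : ℝ) * X i ω) < 0} ∧
    ℙ {ω | ∀ m ∈ Finset.Icc 1 (k - 1),
            (∑ i ∈ Finset.Icc 1 m, ((m - i + 1 : ℕ) : ℝ) * X i ω) < 0}
        = ℙ {ω | ∀ j ∈ Finset.Icc 1 (k - 1), S2 j ω < 0} := by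
  constructor
  · -- first equality via the reversal permutation
    set f : ℕ → ℕ := fun i => if i ∈ Finset.Icc 1 k then k + 1 - i else i with hf
    have hmemf : ∀ i, i ∈ Finset.Icc 1 k → f i = k + 1 - i := by
      intro i hi; simp only [hf, if_pos hi]
    have hinv : Function.Involutive f := by
      intro i
      by_cases h : i ∈ Finset.Icc 1 k
      · simp only [Finset.mem_Icc] at h
        have h1 : f i = k + 1 - i := hmemf i (Finset.mem_Icc.mpr h)
        have h2 : k + 1 - i ∈ Finset.Icc 1 k := by simp only [Finset.mem_Icc]; omega
        rw [h1, hmemf _ h2]; omega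
      · simp only [hf, if_neg h]
    let σ : Equiv.Perm ℕ := hinv.toPerm
    have hσ : ∀ i, σ i = f i := fun i => rfl
    have hfix : ∀ i, n < i → σ i = i := by
      intro i hi
      rw [hσ, hf]
      simp only
      rw [if_neg]
      simp only [Finset.mem_Icc, not_and, not_le]
      omega
    have hmap := hexch σ hfix
    set B : Set (ℕ → ℝ) := {g | ∀ m ∈ Finset.Icc 1 (k - 1),
        (∑ i ∈ Finset.Icc 1 m, ((m - i + 1 : ℕ) : ℝ) * g i) < 0} with hBdef
    have hB : MeasurableSet B := by
      have : B = ⋂ m ∈ Finset.Icc 1 (k - 1),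
          {g : ℕ → ℝ | (∑ i ∈ Finset.Icc 1 m, ((m - i + 1 : ℕ) : ℝ) * g i) < 0} := by
        ext g; simp [hBdef]
      rw [this]
      refine MeasurableSet.biInter (Set.to_countable _) fun m _ => ?_
      refine measurableSet_lt ?_ measurable_const
      exact Finset.measurable_sum _ fun i _ => (measurable_pi_apply i).const_mul _
    have hmeas1 : Measurable (fun ω => fun i => X i ω) := measurable_pi_iff.mpr hmeas
    have hmeas2 : Measurable (fun ω => fun i => X (σ i) ω) :=
      measurable_pi_iff.mpr fun i => hmeas _
    have h1 : ℙ ((fun ω => fun i => X (σ i) ω) ⁻¹' B) = ℙ ((fun ω => fun i => X i ω) ⁻¹' B) := by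
      rw [← Measure.map_apply hmeas2 hB, ← Measure.map_apply hmeas1 hB, hmap]
    -- reindexing identity
    have hsum : ∀ m, m ∈ Finset.Icc 1 (k - 1) → ∀ ω,
        (∑ i ∈ Finset.Icc 1 m, ((m - i + 1 : ℕ) : ℝ) * X (σ i) ω)
          = ∑ i ∈ Finset.Icc 1 m, (i : ℝ) * X (k - m + i) ω := by
      intro m hm ω
      simp only [Finset.mem_Icc] at hm
      refine Finset.sum_nbij' (fun i => m + 1 - i) (fun i => m + 1 - i) ?_ ?_ ?_ ?_ ?_
      · intro i hi; simp only [Finset.mem_Icc] at hi ⊢; omega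
      · intro i hi; simp only [Finset.mem_Icc] at hi ⊢; omega
      · intro i hi; simp only [Finset.mem_Icc] at hi
        show m + 1 - (m + 1 - i) = i; omega
      · intro i hi; simp only [Finset.mem_Icc] at hi
        show m + 1 - (m + 1 - i) = i; omega
      · intro i hi
        simp only [Finset.mem_Icc] at hi
        have hik : i ∈ Finset.Icc 1 k := by simp only [Finset.mem_Icc]; omega
        rw [hσ, hmemf i hik]
        have e1 : m - i + 1 = m + 1 - i := by omega
        have e2 : k - m + (m + 1 - i) = k + 1 - i := by omega
        rw [e1, e2]
    have hset1 : {ω | Y ω < 0} = (fun ω => fun i => X (σ i) ω) ⁻¹' B := by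
      ext ω
      simp only [Set.mem_setOf_eq, Set.mem_preimage, hBdef, Set.mem_setOf_eq, hY ω,
        Finset.sup'_lt_iff]
      refine forall₂_congr fun m hm => ?_
      rw [hsum m hm ω]
      have hpos : (0 : ℝ) < (m : ℝ) + 1 := by positivity
      rw [div_lt_iff₀ hpos, zero_mul]
    have hset2 : {ω | ∀ m ∈ Finset.Icc 1 (k - 1),
        (∑ i ∈ Finset.Icc 1 m, ((m - i + 1 : ℕ) : ℝ) * X i ω) < 0}
          = (fun ω => fun i => X i ω) ⁻¹' B := rfl
    rw [hset1, hset2, h1]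
  · congr 1
    ext ω
    simp only [Set.mem_setOf_eq]
    refine forall₂_congr fun j hj => ?_
    rw [hS2]
end

section
/- Let X_1, X_2, ... be i.i.d. integrable random variables with mean zero and P(X_1 < -ε) > 0 for some ε > 0 with y = kε for an integer k ≥ 1. Define p_n(z) = P(max_{1≤j≤n} S_j^{(2)} < z) and q_n(z) = P(max_{1≤j≤n} S_j^{(2)} ≤ z), where S_j^{(2)} = ∑_{i=1}^j (j-i+1) X_i. Then for every n ≥ 1, p_n(0) ≥ [P(X_1 < -ε)]^k q_n(y). -/
/-!
Condition on the first increment. The iterated sums of `X₁, X₂, …` are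
`S⁽²⁾ⱼ = j X₁ + S'⁽²⁾ⱼ₋₁`, where `S'⁽²⁾` are those of the shifted sequence `X₂, X₃, …`.
On `{X₁ < -ε}`, if `S'⁽²⁾` stays `≤ z + ε` up to time `n`, then `S⁽²⁾` stays `< z`.
The shifted sequence is independent of `X₁` and has the law of the original one, so
`P(X₁ < -ε) q_n(z + ε) ≤ p_n(z)` for `z ≥ 0`. Iterating this `k` times from `z = 0`
(using `p_n ≤ q_n`) gives the claim.
-/

open MeasureTheory ProbabilityTheory Finset

theorem ProbabilityTheory.iIndepFun.indepFun_set {Ω ι : Type*} {mΩ : MeasurableSpace Ω}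
    {μ : Measure Ω} {β : ι → Type*} {m : ∀ i, MeasurableSpace (β i)} {f : ∀ i, Ω → β i}
    (hf : iIndepFun f μ) (hmeas : ∀ i, Measurable (f i)) {S T : Set ι} (hST : Disjoint S T) :
    IndepFun (fun ω (i : S) => f i ω) (fun ω (i : T) => f i ω) μ := by
  have hle (U : Set ι) : MeasurableSpace.comap (fun ω (i : U) => f i ω) MeasurableSpace.pi
      ≤ ⨆ i ∈ U, MeasurableSpace.comap (f i) (m i) := by
    simp_rw [MeasurableSpace.pi, MeasurableSpace.comap_iSup, MeasurableSpace.comap_comp]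
    exact iSup_le fun i =>
      le_iSup₂ (f := fun i (_ : i ∈ U) => MeasurableSpace.comap (f i) (m i)) i.1 i.2
  exact indep_of_indep_of_le_right
    (indep_of_indep_of_le_left (indep_iSup_of_disjoint (fun i => (hmeas i).comap_le) hf hST)
      (hle S)) (hle T)

section IIDSequence

variable {Ω β : Type*} {mΩ : MeasurableSpace Ω} {mβ : MeasurableSpace β} {μ : Measure Ω}
  {X : ℕ → Ω → β}

theorem ProbabilityTheory.iIndepFun.indepFun_shift (hX : iIndepFun X μ)
    (hmeas : ∀ i, Measurable (X i)) (a : ℕ) :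
    IndepFun (X a) (fun ω i => X (i + (a + 1)) ω) μ := by
  have hST : Disjoint ({a} : Set ℕ) (Set.Ici (a + 1)) := by simp
  exact (hX.indepFun_set hmeas hST).comp (_mγ := mβ) (φ := fun v => v ⟨a, rfl⟩)
    (ψ := fun v i => v ⟨i + (a + 1), Nat.le_add_left _ _⟩) (measurable_pi_apply _)
    (measurable_pi_lambda _ fun _ => measurable_pi_apply _)

theorem ProbabilityTheory.iIndepFun.map_shift_eq_infinitePi (hX : iIndepFun X μ)
    (hmeas : ∀ i, Measurable (X i)) {j : ℕ} (hid : ∀ i, IdentDistrib (X i) (X j) μ μ) (a : ℕ) :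
    μ.map (fun ω i => X (i + a) ω) = Measure.infinitePi fun _ => μ.map (X j) := by
  rw [(hX.precomp (add_left_injective a)).map_fun_eq_infinitePi_map fun i => hmeas _]
  simp only [(hid _).map_eq]

end IIDSequence

/-- `iteratedPartialSum x j = ∑_{i<j} (j - i) xᵢ = ∑_{l ≤ j} (x₀ + ⋯ + x_{l-1})`. Sequences are
indexed from `0` here, so `S⁽²⁾ⱼ = iteratedPartialSum (fun i => X (i + 1)) j`. -/
def iteratedPartialSum (x : ℕ → ℝ) (j : ℕ) : ℝ :=
  ∑ i ∈ range j, ((j : ℝ) - i) * x i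

namespace iteratedPartialSum

@[simp]
theorem zero (x : ℕ → ℝ) : iteratedPartialSum x 0 = 0 := by
  simp [iteratedPartialSum]

theorem succ (x : ℕ → ℝ) (j : ℕ) :
    iteratedPartialSum x (j + 1) = (j + 1) * x 0 + iteratedPartialSum (fun i => x (i + 1)) j := by
  simp only [iteratedPartialSum, sum_range_succ']
  push_cast
  simp only [add_sub_add_right_eq_sub]
  ring

theorem measurable (j : ℕ) : Measurable fun x : ℕ → ℝ => iteratedPartialSum x j := by
  unfold iteratedPartialSum
  fun_prop

end iteratedPartialSum

theorem sum_Icc_eq_iteratedPartialSum (x : ℕ → ℝ) (j : ℕ) :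
    ∑ i ∈ Icc 1 j, ((j - i + 1 : ℕ) : ℝ) * x i = iteratedPartialSum (fun i => x (i + 1)) j := by
  rw [← Ico_add_one_right_eq_Icc, sum_Ico_eq_sum_range, iteratedPartialSum]
  refine sum_congr rfl fun i hi => ?_
  rw [mem_range] at hi
  rw [add_comm 1 i, Nat.cast_add, Nat.cast_sub (by omega)]
  push_cast
  ring

theorem iteratedPartialSum_lt_of_head_lt {x : ℕ → ℝ} {ε z : ℝ} {n : ℕ} (hε : 0 ≤ ε)
    (hz : -ε ≤ z) (hhead : x 0 < -ε)
    (htail : ∀ j ∈ Icc 1 n, iteratedPartialSum (fun i => x (i + 1)) j ≤ z + ε) :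
    ∀ j ∈ Icc 1 n, iteratedPartialSum x j < z := by
  intro j hj
  obtain ⟨j, rfl⟩ : ∃ j', j = j' + 1 := ⟨j - 1, by grind⟩
  have htail_j : iteratedPartialSum (fun i => x (i + 1)) j ≤ z + ε := by
    rcases Nat.eq_zero_or_pos j with rfl | hj0
    · rw [iteratedPartialSum.zero]
      linarith
    · exact htail j (mem_Icc.2 ⟨hj0, by grind⟩)
  have hmul : (j : ℝ) * x 0 ≤ 0 :=
    mul_nonpos_of_nonneg_of_nonpos j.cast_nonneg (by linarith)
  rw [iteratedPartialSum.succ]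
  linarith

theorem ProbabilityTheory.iIndepFun.measure_head_lt_mul_measure_iteratedPartialSum_le_le {Ω : Type*}
    {mΩ : MeasurableSpace Ω} {μ : Measure Ω} {X : ℕ → Ω → ℝ} (hX : iIndepFun X μ)
    (hmeas : ∀ i, Measurable (X i)) (hid : ∀ i, IdentDistrib (X i) (X 1) μ μ) {ε z : ℝ}
    (hε : 0 ≤ ε) (hz : -ε ≤ z) (n : ℕ) :
    μ {ω | X 1 ω < -ε}
        * μ {ω | ∀ j ∈ Icc 1 n, iteratedPartialSum (fun i => X (i + 1) ω) j ≤ z + ε}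
      ≤ μ {ω | ∀ j ∈ Icc 1 n, iteratedPartialSum (fun i => X (i + 1) ω) j < z} := by
  set A := {x : ℕ → ℝ | ∀ j ∈ Icc 1 n, iteratedPartialSum x j ≤ z + ε}
  have hA : MeasurableSet A := by
    simp only [A, Set.ofPred_forall]
    exact .iInter fun j => .iInter fun _ =>
      measurableSet_le (iteratedPartialSum.measurable j) measurable_const
  have hlaw : μ ((fun ω i => X (i + 1) ω) ⁻¹' A) = μ ((fun ω i => X (i + 1 + 1) ω) ⁻¹' A) := by
    rw [← Measure.map_apply (by fun_prop) hA, ← Measure.map_apply (by fun_prop) hA,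
      hX.map_shift_eq_infinitePi hmeas hid 1, hX.map_shift_eq_infinitePi hmeas hid (1 + 1)]
  calc μ {ω | X 1 ω < -ε} * μ ((fun ω i => X (i + 1) ω) ⁻¹' A)
      = μ (X 1 ⁻¹' Set.Iio (-ε) ∩ (fun ω i => X (i + 1 + 1) ω) ⁻¹' A) := by
        rw [hlaw, (hX.indepFun_shift hmeas 1).measure_inter_preimage_eq_mul _ _
          measurableSet_Iio hA]
        rfl
    _ ≤ _ := measure_mono fun ω ⟨hhead, htail⟩ =>
        iteratedPartialSum_lt_of_head_lt (x := fun i => X (i + 1) ω) hε hz hhead htail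

theorem pow_mul_le_of_mul_le_shift {M : Type*} [CommMonoid M] [Preorder M] [MulLeftMono M]
    {p q : ℝ → M} {c : M} {ε : ℝ} (hε : 0 ≤ ε) (hpq : ∀ z, p z ≤ q z)
    (hstep : ∀ z, 0 ≤ z → c * q (z + ε) ≤ p z) {k : ℕ} (hk : 1 ≤ k) :
    c ^ k * q (k * ε) ≤ p 0 := by
  induction k, hk using Nat.le_induction with
  | base => simpa using hstep 0 le_rfl
  | succ k _ ih =>
    have hkε : 0 ≤ (k : ℝ) * ε := by positivity
    calc c ^ (k + 1) * q ((k + 1 : ℕ) * ε) = c ^ k * (c * q (k * ε + ε)) := by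
          rw [pow_succ, mul_assoc]; push_cast; ring_nf
      _ ≤ c ^ k * q (k * ε) := mul_le_mul_right ((hstep _ hkε).trans (hpq _)) _
      _ ≤ p 0 := ih

theorem iterated_persistence_level_comparison_general
    {Ω : Type*} [MeasureSpace Ω] [IsProbabilityMeasure (ℙ : Measure Ω)]
    (X : ℕ → Ω → ℝ) (hmeas : ∀ i, Measurable (X i))
    (hindep : iIndepFun X ℙ)
    (hid : ∀ i, IdentDistrib (X i) (X 1) ℙ ℙ)
    (ε : ℝ) (hε : 0 < ε)
    (k : ℕ) (hk : 1 ≤ k)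
    (S2 : ℕ → Ω → ℝ)
    (hS2 : ∀ j ω, S2 j ω = ∑ i ∈ Finset.Icc 1 j, ((j - i + 1 : ℕ) : ℝ) * X i ω)
    (n : ℕ) :
    ((ℙ {ω | X 1 ω < -ε}).toReal) ^ k
        * (ℙ {ω | ∀ j ∈ Finset.Icc 1 n, S2 j ω ≤ k * ε}).toReal
      ≤ (ℙ {ω | ∀ j ∈ Finset.Icc 1 n, S2 j ω < 0}).toReal := by
  obtain rfl : S2 = fun j ω => iteratedPartialSum (fun i => X (i + 1) ω) j :=
    funext₂ fun j ω => (hS2 j ω).trans (sum_Icc_eq_iteratedPartialSum (X · ω) j)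
  have hcomparison := pow_mul_le_of_mul_le_shift hε.le
    (p := fun z => ℙ {ω | ∀ j ∈ Icc 1 n, iteratedPartialSum (fun i => X (i + 1) ω) j < z})
    (q := fun w => ℙ {ω | ∀ j ∈ Icc 1 n, iteratedPartialSum (fun i => X (i + 1) ω) j ≤ w})
    (fun _ => measure_mono fun _ h j hj => (h j hj).le)
    (fun _ hz => hindep.measure_head_lt_mul_measure_iteratedPartialSum_le_le hmeas hid hε.le
      (by linarith) n) hk
  rw [← ENNReal.toReal_pow, ← ENNReal.toReal_mul]
  exact ENNReal.toReal_mono (measure_ne_top _ _) hcomparison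

/-- For i.i.d. integrable mean-zero variables with `P(X_1 < -ε) > 0`
and `y = kε`, the persistence probabilities of the iterated partial sums satisfy
`p_n(0) ≥ [P(X_1 < -ε)]^k q_n(y)` for every `n ≥ 1`. -/
theorem iterated_persistence_level_comparison
    {Ω : Type*} [MeasureSpace Ω] [IsProbabilityMeasure (ℙ : Measure Ω)]
    (X : ℕ → Ω → ℝ) (hmeas : ∀ i, Measurable (X i))
    (hindep : iIndepFun X ℙ)
    (hid : ∀ i, IdentDistrib (X i) (X 1) ℙ ℙ)
    (hint : Integrable (X 1) ℙ)
    (hmean : ∫ ω, X 1 ω = 0)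
    (ε : ℝ) (hε : 0 < ε) (hεpos : 0 < (ℙ {ω | X 1 ω < -ε}).toReal)
    (k : ℕ) (hk : 1 ≤ k)
    (S2 : ℕ → Ω → ℝ)
    (hS2 : ∀ j ω, S2 j ω = ∑ i ∈ Finset.Icc 1 j, ((j - i + 1 : ℕ) : ℝ) * X i ω)
    (n : ℕ) (hn : 1 ≤ n) :
    ((ℙ {ω | X 1 ω < -ε}).toReal) ^ k
        * (ℙ {ω | ∀ j ∈ Finset.Icc 1 n, S2 j ω ≤ k * ε}).toReal
      ≤ (ℙ {ω | ∀ j ∈ Finset.Icc 1 n, S2 j ω < 0}).toReal :=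
  iterated_persistence_level_comparison_general X hmeas hindep hid ε hε k hk S2 hS2 n
end

section
/- Let a_0, a_1, a_2, ... and b_n be non-negative sequences with a_n non-increasing, satisfying ∑_{k=0}^{2m+1} a_k a_{2m+1-k} ≥ b_{2m+2}/c_2 and a_k ≤ c_1 √(b_{k+1}/(k+1)) for all k, where b_n is non-decreasing. Then a_m ≥ (1/(4 c_1 c_2)) √(b_{m+1}/(m+1)) for every m ≥ 0. -/
open Finset

lemma sum_invsqrt_aux (m : ℕ) :
    ∑ k ∈ Finset.range (m+1), (1:ℝ)/Real.sqrt (k+1) ≤ 2 * Real.sqrt (m+1) := by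
  induction m with
  | zero => simp
  | succ n ih =>
    rw [Finset.sum_range_succ]
    have h1 : (0:ℝ) < Real.sqrt ((n:ℝ)+1+1) := Real.sqrt_pos.mpr (by positivity)
    have key : (1:ℝ)/Real.sqrt ((n:ℝ)+1+1)
        ≤ 2*Real.sqrt ((n:ℝ)+1+1) - 2*Real.sqrt ((n:ℝ)+1) := by
      rw [div_le_iff₀ h1]
      have e1 : Real.sqrt ((n:ℝ)+1) ^ 2 = (n:ℝ)+1 := Real.sq_sqrt (by positivity)
      have e2 : Real.sqrt ((n:ℝ)+1+1) ^ 2 = (n:ℝ)+1+1 := Real.sq_sqrt (by positivity)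
      nlinarith [Real.sqrt_nonneg ((n:ℝ)+1), Real.sqrt_nonneg ((n:ℝ)+1+1)]
    push_cast
    push_cast at ih
    linarith

/-- Abstract combination step: if `a` is non-negative non-increasing, `b`
non-negative non-decreasing, `∑_{k=0}^{2m+1} a_k a_{2m+1-k} ≥ b_{2m+2}/c₂` and
`a_k ≤ c₁ √(b_{k+1}/(k+1))` for all `k`, then
`a_m ≥ (1/(4c₁c₂)) √(b_{m+1}/(m+1))` for every `m`. -/
theorem convolution_bounds_combination
    (a b : ℕ → ℝ)
    (ha0 : ∀ k, 0 ≤ a k) (hb0 : ∀ n, 0 ≤ b n)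
    (hamono : Antitone a) (hbmono : Monotone b)
    (c₁ c₂ : ℝ) (hc₁ : 0 < c₁) (hc₂ : 0 < c₂)
    (hlow : ∀ m : ℕ, b (2 * m + 2) / c₂
        ≤ ∑ k ∈ Finset.range (2 * m + 2), a k * a (2 * m + 1 - k))
    (hupp : ∀ k : ℕ, a k ≤ c₁ * Real.sqrt (b (k + 1) / (k + 1))) :
    ∀ m : ℕ, (1 / (4 * c₁ * c₂)) * Real.sqrt (b (m + 1) / (m + 1)) ≤ a m := by
  intro m
  set S := ∑ k ∈ Finset.range (m+1), a k with hS
  -- Step 1: convolution sum ≤ 2 * a m * S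
  have hsplit : ∑ k ∈ Finset.range (2 * m + 2), a k * a (2 * m + 1 - k)
      = (∑ k ∈ Finset.range (m+1), a k * a (2 * m + 1 - k))
      + ∑ i ∈ Finset.range (m+1), a (m+1+i) * a (2 * m + 1 - (m+1+i)) := by
    have h : 2 * m + 2 = (m+1) + (m+1) := by ring
    rw [h, Finset.sum_range_add]
  have hbound1 : ∑ k ∈ Finset.range (m+1), a k * a (2 * m + 1 - k) ≤ S * a m := by
    rw [hS, Finset.sum_mul]
    apply Finset.sum_le_sum
    intro k hk
    have hk' : k ≤ m := Nat.lt_succ_iff.mp (Finset.mem_range.mp hk)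
    have : a (2 * m + 1 - k) ≤ a m := hamono (by omega)
    exact mul_le_mul_of_nonneg_left this (ha0 k)
  have hbound2 : ∑ i ∈ Finset.range (m+1), a (m+1+i) * a (2 * m + 1 - (m+1+i)) ≤ a m * S := by
    have hrefl : ∑ i ∈ Finset.range (m+1), a (2 * m + 1 - (m+1+i)) = S := by
      rw [hS]
      apply Finset.sum_nbij' (fun i => m - i) (fun k => m - k) <;>
        intro i hi <;> simp only [Finset.mem_range, Nat.lt_succ_iff] at * <;> try omega
      congr 1; omega
    calc ∑ i ∈ Finset.range (m+1), a (m+1+i) * a (2 * m + 1 - (m+1+i))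
        ≤ ∑ i ∈ Finset.range (m+1), a m * a (2 * m + 1 - (m+1+i)) := by
          apply Finset.sum_le_sum
          intro i hi
          exact mul_le_mul_of_nonneg_right (hamono (by omega)) (ha0 _)
      _ = a m * S := by rw [← hrefl, Finset.mul_sum]
  have hconv : b (2*m+2) / c₂ ≤ 2 * a m * S := by
    have := hlow m
    rw [hsplit] at this
    nlinarith
  -- Step 2: S ≤ 2 * c₁ * sqrt ((m+1) * b (m+1))
  have hSnn : 0 ≤ S := Finset.sum_nonneg fun k _ => ha0 k
  have hSle : S ≤ 2 * c₁ * Real.sqrt (((m:ℝ)+1) * b (m+1)) := by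
    have h1 : S ≤ ∑ k ∈ Finset.range (m+1),
        c₁ * Real.sqrt (b (m+1)) * ((1:ℝ) / Real.sqrt ((k:ℝ)+1)) := by
      rw [hS]
      apply Finset.sum_le_sum
      intro k hk
      have hk' : k ≤ m := Nat.lt_succ_iff.mp (Finset.mem_range.mp hk)
      refine (hupp k).trans ?_
      have hsq : Real.sqrt (b (k+1) / ((k:ℝ)+1))
          ≤ Real.sqrt (b (m+1)) / Real.sqrt ((k:ℝ)+1) := by
        rw [Real.sqrt_div (hb0 _)]
        gcongr <;> first
          | exact hb0 _
          | exact hbmono (by omega)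
          | positivity
      calc c₁ * Real.sqrt (b (k+1) / ((k:ℝ)+1))
          ≤ c₁ * (Real.sqrt (b (m+1)) / Real.sqrt ((k:ℝ)+1)) :=
            mul_le_mul_of_nonneg_left hsq hc₁.le
        _ = c₁ * Real.sqrt (b (m+1)) * ((1:ℝ) / Real.sqrt ((k:ℝ)+1)) := by ring
    have h2 : ∑ k ∈ Finset.range (m+1),
        c₁ * Real.sqrt (b (m+1)) * ((1:ℝ) / Real.sqrt ((k:ℝ)+1))
        ≤ c₁ * Real.sqrt (b (m+1)) * (2 * Real.sqrt ((m:ℝ)+1)) := by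
      rw [← Finset.mul_sum]
      apply mul_le_mul_of_nonneg_left _ (by positivity)
      exact sum_invsqrt_aux m
    have h3 : c₁ * Real.sqrt (b (m+1)) * (2 * Real.sqrt ((m:ℝ)+1))
        = 2 * c₁ * Real.sqrt (((m:ℝ)+1) * b (m+1)) := by
      rw [Real.sqrt_mul (by positivity)]
      ring
    linarith
  -- Step 3: combine
  have hkey : b (m+1) ≤ 4 * c₁ * c₂ * a m * Real.sqrt (((m:ℝ)+1) * b (m+1)) := by
    have hmono' : b (m+1) ≤ b (2*m+2) := hbmono (by omega)
    have h4 := (div_le_iff₀ hc₂).mp hconv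
    nlinarith [mul_le_mul_of_nonneg_left hSle
      (mul_nonneg (mul_nonneg (by norm_num : (0:ℝ) ≤ 2) (ha0 m)) hc₂.le)]
  rcases eq_or_lt_of_le (hb0 (m+1)) with hb | hb
  · rw [← hb]
    simp only [zero_div, Real.sqrt_zero, mul_zero]
    exact ha0 m
  · have hr : 0 < Real.sqrt (((m:ℝ)+1) * b (m+1)) := Real.sqrt_pos.mpr (by positivity)
    have hprod : Real.sqrt (b (m+1) / ((m:ℝ)+1)) * Real.sqrt (((m:ℝ)+1) * b (m+1))
        = b (m+1) := by
      rw [← Real.sqrt_mul (by positivity)]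
      have : b (m+1) / ((m:ℝ)+1) * (((m:ℝ)+1) * b (m+1)) = b (m+1) ^ 2 := by
        field_simp
      rw [this, Real.sqrt_sq (hb0 _)]
    have ht : Real.sqrt (b (m+1) / ((m:ℝ)+1)) ≤ 4 * c₁ * c₂ * a m := by
      have h' : Real.sqrt (b (m+1) / ((m:ℝ)+1)) * Real.sqrt (((m:ℝ)+1) * b (m+1))
          ≤ (4 * c₁ * c₂ * a m) * Real.sqrt (((m:ℝ)+1) * b (m+1)) := by
        rw [hprod]; linarith [hkey]
      exact le_of_mul_le_mul_right h' hr
    calc (1 / (4 * c₁ * c₂)) * Real.sqrt (b (m+1) / ((m:ℝ)+1))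
        ≤ (1 / (4 * c₁ * c₂)) * (4 * c₁ * c₂ * a m) := by
          apply mul_le_mul_of_nonneg_left ht (by positivity)
      _ = a m := by field_simp
end
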